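/- arXiv:1707.08318 — 7 statements merged into one kernel-verified Lean document; each statement's English description precedes it below -/
import Mathlib

section
/- Let b be a connected, canonically compactifiable graph over a finite discrete measure space (X,m). Let u ∈ D(Q) and let f : ℝ → ℝ be continuously differentiable. Then the composition f ∘ u belongs to D(Q). -/
open scoped BigOperators

/-- `u` is square-summable with respect to the measure `m`, i.e. `u ∈ ℓ²(X,m)`. -/
def MemL2 {X : Type*} (m : X → ℝ) (u : X → ℝ) : Prop :=
  Summable (fun x => u x ^ 2 * m x)

/-- `u` has finite energy: the sum defining `Q̃(u)` converges. -/
def FinEnergy {X : Type*} (b : X → X → ℝ) (u : X → ℝ) : Prop :=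
  Summable (fun p : X × X => b p.1 p.2 * (u p.1 - u p.2) ^ 2)

/-- The energy `Q(u) = (1/2) Σ_{x,y} b(x,y) (u(x) - u(y))²`. -/
noncomputable def energy {X : Type*} (b : X → X → ℝ) (u : X → ℝ) : ℝ :=
  (1 / 2) * ∑' p : X × X, b p.1 p.2 * (u p.1 - u p.2) ^ 2

/-- The bilinear energy form `Q(u,v) = (1/2) Σ_{x,y} b(x,y)(u(x)-u(y))(v(x)-v(y))`. -/
noncomputable def energyBil {X : Type*} (b : X → X → ℝ) (u v : X → ℝ) : ℝ :=
  (1 / 2) * ∑' p : X × X, b p.1 p.2 * (u p.1 - u p.2) * (v p.1 - v p.2)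

/-- The form domain `D(Q) = ℓ²(X,m) ∩ D̃`. -/
def MemDQ {X : Type*} (b : X → X → ℝ) (m : X → ℝ) (u : X → ℝ) : Prop :=
  MemL2 m u ∧ FinEnergy b u

/-- The form norm `‖u‖_Q = (Q(u) + ‖u‖₂²)^{1/2}`. -/
noncomputable def formNorm {X : Type*} (b : X → X → ℝ) (m : X → ℝ) (u : X → ℝ) : ℝ :=
  Real.sqrt (energy b u + ∑' x, u x ^ 2 * m x)

/-- `b` is a graph over `X`: symmetric, nonnegative, zero on the diagonal,
with summable rows. -/
structure IsGraph {X : Type*} (b : X → X → ℝ) : Prop where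
  symm : ∀ x y, b x y = b y x
  nonneg : ∀ x y, 0 ≤ b x y
  diag : ∀ x, b x x = 0
  row_summable : ∀ x, Summable (fun y => b x y)

/-- The graph `b` is connected: any two points are joined by a path of edges of
positive weight. -/
def GraphConnected {X : Type*} (b : X → X → ℝ) : Prop :=
  ∀ x y : X, Relation.ReflTransGen (fun a c => 0 < b a c) x y

/-- `(X,m)` is a finite discrete measure space: `m > 0` everywhere and `m(X) < ∞`. -/
structure FinMeasure {X : Type*} (m : X → ℝ) : Prop where
  pos : ∀ x, 0 < m x
  summable : Summable m

/-- The graph `b` over `(X,m)` is canonically compactifiable: every function in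
`D(Q)` is bounded. -/
def CanCompact {X : Type*} (b : X → X → ℝ) (m : X → ℝ) : Prop :=
  ∀ u : X → ℝ, MemDQ b m u → ∃ M : ℝ, ∀ x, |u x| ≤ M

/-- `u ∈ D(L)` with `L u = f` for the Neumann Laplacian `L`:
`u ∈ D(Q)`, `f ∈ ℓ²(X,m)` and `Q(u,v) = ⟨f,v⟩` for all `v ∈ D(Q)`. -/
def IsLap {X : Type*} (b : X → X → ℝ) (m : X → ℝ) (u f : X → ℝ) : Prop :=
  MemDQ b m u ∧ MemL2 m f ∧
    ∀ v : X → ℝ, MemDQ b m v → energyBil b u v = ∑' x, f x * v x * m x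

/-- The mean `ū = ⟨u,1⟩ / m(X)`. -/
noncomputable def mean {X : Type*} (m : X → ℝ) (u : X → ℝ) : ℝ :=
  (∑' x, u x * m x) / (∑' x, m x)


/-- `D(Q)` is stable under composition with `C¹` functions. -/
theorem stmt5 {X : Type*} [Countable X] (b : X → X → ℝ) (m : X → ℝ)
    (hb : IsGraph b) (hconn : GraphConnected b) (hm : FinMeasure m)
    (hcc : CanCompact b m) (u : X → ℝ) (hu : MemDQ b m u)
    (f : ℝ → ℝ) (hf : ContDiff ℝ 1 f) :
    MemDQ b m (f ∘ u) := by
  classical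
  obtain ⟨M0, hM0⟩ := hcc u hu
  set M := max M0 0 with hMdef
  have hM : ∀ x, u x ∈ Set.Icc (-M) M := by
    intro x
    have := hM0 x
    constructor
    · have : -(max M0 0) ≤ -|u x| := by
        simp only [neg_le_neg_iff]
        exact le_max_of_le_left this
      exact le_trans this (neg_abs_le _)
    · exact le_trans (le_abs_self _) (le_max_of_le_left (hM0 x))
  have hMnn : (0:ℝ) ≤ M := le_max_right _ _
  have h0s : (0:ℝ) ∈ Set.Icc (-M) M := by constructor <;> simp [hMnn]
  -- bound on f on Icc
  obtain ⟨K, hK⟩ := (isCompact_Icc (a := -M) (b := M)).exists_bound_of_continuousOn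
    hf.continuous.continuousOn
  -- bound on deriv f on Icc
  obtain ⟨C, hC⟩ := (isCompact_Icc (a := -M) (b := M)).exists_bound_of_continuousOn
    (hf.continuous_deriv le_rfl).continuousOn
  have hCnn : 0 ≤ C := le_trans (norm_nonneg _) (hC 0 h0s)
  have hlip : ∀ x y : X, |f (u x) - f (u y)| ≤ C * |u x - u y| := by
    intro x y
    have := (convex_Icc (-M) M).norm_image_sub_le_of_norm_deriv_le (𝕜 := ℝ)
      (fun t _ => hf.differentiable one_ne_zero t) hC (hM y) (hM x)
    simpa [Real.norm_eq_abs] using this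
  constructor
  · -- MemL2
    refine Summable.of_nonneg_of_le (fun x => ?_) (fun x => ?_) (hm.summable.mul_left (K^2))
    · exact mul_nonneg (sq_nonneg _) (hm.pos x).le
    · have h1 : |(f ∘ u) x| ≤ K := by simpa [Real.norm_eq_abs] using hK (u x) (hM x)
      have : ((f ∘ u) x)^2 ≤ K^2 := by
        have := sq_le_sq' (neg_le_of_abs_le h1) (le_of_abs_le h1)
        simpa using this
      exact mul_le_mul_of_nonneg_right this (hm.pos x).le
  · -- FinEnergy
    refine Summable.of_nonneg_of_le (fun p => ?_) (fun p => ?_) (hu.2.mul_left (C^2))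
    · exact mul_nonneg (hb.nonneg _ _) (sq_nonneg _)
    · have h1 : |(f ∘ u) p.1 - (f ∘ u) p.2| ≤ C * |u p.1 - u p.2| := hlip p.1 p.2
      have h2 : ((f ∘ u) p.1 - (f ∘ u) p.2)^2 ≤ C^2 * (u p.1 - u p.2)^2 := by
        have := sq_le_sq' (neg_le_of_abs_le h1) (le_of_abs_le h1)
        calc ((f ∘ u) p.1 - (f ∘ u) p.2)^2 ≤ (C * |u p.1 - u p.2|)^2 := by simpa using this
          _ = C^2 * (u p.1 - u p.2)^2 := by rw [mul_pow, sq_abs]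
      calc b p.1 p.2 * ((f ∘ u) p.1 - (f ∘ u) p.2)^2
          ≤ b p.1 p.2 * (C^2 * (u p.1 - u p.2)^2) :=
            mul_le_mul_of_nonneg_left h2 (hb.nonneg _ _)
        _ = C^2 * (b p.1 p.2 * (u p.1 - u p.2)^2) := by ring
end

section
/- Let b be a connected, canonically compactifiable graph over a finite discrete measure space (X,m), let c < 0, and let h ∈ ℓ²(X,m) with h not identically zero. If there exists u ∈ D(L) with Lu = h e^u − c (i.e. Lu(x) = h(x)e^{u(x)} − c for all x ∈ X), then h̄ < 0. -/
open scoped BigOperators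

private lemma exp_lip {a b K : ℝ} (ha : a ≤ K) (hb : b ≤ K) :
    |Real.exp a - Real.exp b| ≤ Real.exp K * |a - b| := by
  rcases le_total b a with hab | hab
  · have h1 : b - a + 1 ≤ Real.exp (b - a) := Real.add_one_le_exp _
    have h2 : Real.exp a * Real.exp (b - a) = Real.exp b := by
      rw [← Real.exp_add]; ring_nf
    have h3 : Real.exp a ≤ Real.exp K := Real.exp_le_exp.mpr ha
    have h4 : 0 < Real.exp a := Real.exp_pos a
    have h5 : Real.exp b ≤ Real.exp a := Real.exp_le_exp.mpr hab
    rw [abs_of_nonneg (by linarith), abs_of_nonneg (by linarith)]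
    nlinarith
  · have h1 : a - b + 1 ≤ Real.exp (a - b) := Real.add_one_le_exp _
    have h2 : Real.exp b * Real.exp (a - b) = Real.exp a := by
      rw [← Real.exp_add]; ring_nf
    have h3 : Real.exp b ≤ Real.exp K := Real.exp_le_exp.mpr hb
    have h4 : 0 < Real.exp b := Real.exp_pos b
    have h5 : Real.exp a ≤ Real.exp b := Real.exp_le_exp.mpr hab
    rw [abs_of_nonpos (by linarith), abs_of_nonpos (by linarith)]
    nlinarith

/-- for `c < 0`, the existence of a solution of `Lu = h e^u - c`
implies `h̄ < 0`. -/
theorem stmt8 {X : Type*} [Countable X] (b : X → X → ℝ) (m : X → ℝ)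
    (hb : IsGraph b) (hconn : GraphConnected b) (hm : FinMeasure m)
    (hcc : CanCompact b m) (c : ℝ) (hc : c < 0)
    (h : X → ℝ) (hh2 : MemL2 m h) (hne : h ≠ 0)
    (hex : ∃ u : X → ℝ, IsLap b m u (fun x => h x * Real.exp (u x) - c)) :
    mean m h < 0 := by
  obtain ⟨u, huDQ, hf2, hQ⟩ := hex
  obtain ⟨x0, hx0⟩ : ∃ x, h x ≠ 0 := Function.ne_iff.mp hne
  obtain ⟨M, hM⟩ := hcc u huDQ
  set v : X → ℝ := fun x => Real.exp (-u x) with hv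
  -- pointwise bounds
  have hvpos : ∀ x, 0 < v x := fun x => Real.exp_pos _
  have hvle : ∀ x, v x ≤ Real.exp M := by
    intro x
    exact Real.exp_le_exp.mpr (by have := hM x; rw [abs_le] at this; linarith [this.1])
  -- v ∈ ℓ²
  have hvL2 : MemL2 m v := by
    apply Summable.of_nonneg_of_le (fun x => mul_nonneg (sq_nonneg _) (hm.pos x).le)
      (f := fun x => Real.exp M ^ 2 * m x)
    · intro x
      have h1 := hvle x
      have h2 := (hvpos x).le
      have h4 : v x ^ 2 ≤ Real.exp M ^ 2 := pow_le_pow_left₀ h2 h1 2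
      exact mul_le_mul_of_nonneg_right h4 (hm.pos x).le
    · exact hm.summable.mul_left _
  -- v has finite energy
  have hvFE : FinEnergy b v := by
    apply Summable.of_nonneg_of_le
      (f := fun p : X × X => Real.exp M ^ 2 * (b p.1 p.2 * (u p.1 - u p.2) ^ 2))
    · intro p
      have := hb.nonneg p.1 p.2
      positivity
    · intro p
      have hlip : |v p.1 - v p.2| ≤ Real.exp M * |(-u p.1) - (-u p.2)| := by
        apply exp_lip
        · have := hM p.1; rw [abs_le] at this; linarith [this.1]
        · have := hM p.2; rw [abs_le] at this; linarith [this.1]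
      have hsq : (v p.1 - v p.2) ^ 2 ≤ Real.exp M ^ 2 * (u p.1 - u p.2) ^ 2 := by
        have h1 : |(-u p.1) - (-u p.2)| = |u p.1 - u p.2| := by
          rw [← abs_neg]; ring_nf
        rw [h1] at hlip
        have h2 := abs_nonneg (v p.1 - v p.2)
        have h3 := abs_nonneg (u p.1 - u p.2)
        have := sq_abs (v p.1 - v p.2)
        have := sq_abs (u p.1 - u p.2)
        nlinarith
      calc b p.1 p.2 * (v p.1 - v p.2) ^ 2
          ≤ b p.1 p.2 * (Real.exp M ^ 2 * (u p.1 - u p.2) ^ 2) :=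
            mul_le_mul_of_nonneg_left hsq (hb.nonneg p.1 p.2)
        _ = Real.exp M ^ 2 * (b p.1 p.2 * (u p.1 - u p.2) ^ 2) := by ring
    · exact huDQ.2.mul_left _
  have hvDQ : MemDQ b m v := ⟨hvL2, hvFE⟩
  -- apply the weak formulation with test function v
  have heq := hQ v hvDQ
  -- LHS is nonpositive
  have hL : energyBil b u v ≤ 0 := by
    unfold energyBil
    have : ∑' p : X × X, b p.1 p.2 * (u p.1 - u p.2) * (v p.1 - v p.2) ≤ 0 := by
      apply tsum_nonpos
      intro p
      have hbnn := hb.nonneg p.1 p.2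
      have hmono : (u p.1 - u p.2) * (v p.1 - v p.2) ≤ 0 := by
        rcases le_total (u p.1) (u p.2) with hle | hle
        · have : v p.2 ≤ v p.1 := Real.exp_le_exp.mpr (by linarith)
          nlinarith
        · have : v p.1 ≤ v p.2 := Real.exp_le_exp.mpr (by linarith)
          nlinarith
      calc b p.1 p.2 * (u p.1 - u p.2) * (v p.1 - v p.2)
          = b p.1 p.2 * ((u p.1 - u p.2) * (v p.1 - v p.2)) := by ring
        _ ≤ 0 := mul_nonpos_of_nonneg_of_nonpos hbnn hmono
    linarith
  -- summability of h·m and v·m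
  have hhm : Summable (fun x => h x * m x) := by
    apply Summable.of_abs
    apply Summable.of_nonneg_of_le (fun x => abs_nonneg _)
      (f := fun x => (h x ^ 2 * m x + m x) / 2)
    · intro x
      have h3 := (hm.pos x).le
      rw [abs_mul, abs_of_nonneg h3]
      nlinarith [sq_nonneg (|h x| - 1), sq_abs (h x), abs_nonneg (h x)]
    · exact (hh2.add hm.summable).div_const 2
  have hvm : Summable (fun x => v x * m x) := by
    apply Summable.of_nonneg_of_le (fun x => mul_nonneg (hvpos x).le (hm.pos x).le)
      (f := fun x => Real.exp M * m x)
    · intro x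
      exact mul_le_mul_of_nonneg_right (hvle x) (hm.pos x).le
    · exact hm.summable.mul_left _
  -- rewrite the RHS
  have hkey : ∀ x : X, (h x * Real.exp (u x) - c) * v x * m x
      = h x * m x - c * (v x * m x) := by
    intro x
    have h1 : Real.exp (u x) * Real.exp (-u x) = 1 := by
      rw [← Real.exp_add]; simp
    simp only [hv]
    linear_combination h x * m x * h1
  have hR : (∑' x, (h x * Real.exp (u x) - c) * v x * m x)
      = (∑' x, h x * m x) - c * ∑' x, v x * m x := by
    rw [tsum_congr hkey, Summable.tsum_sub hhm ((hvm).mul_left c), tsum_mul_left]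
  rw [heq] at hL
  rw [hR] at hL
  -- positivity of ∑ v·m and ∑ m
  have hvmpos : 0 < ∑' x, v x * m x :=
    Summable.tsum_pos hvm (fun x => mul_nonneg (hvpos x).le (hm.pos x).le) x0
      (mul_pos (hvpos x0) (hm.pos x0))
  have hnum : (∑' x, h x * m x) < 0 := by nlinarith
  have hden : 0 < ∑' x, m x :=
    Summable.tsum_pos hm.summable (fun x => (hm.pos x).le) x0 (hm.pos x0)
  unfold mean
  exact div_neg_of_neg_of_pos hnum hden
end

section
/- Let b be a connected, canonically compactifiable graph over a finite discrete measure space (X,m), let k ∈ ℓ²(X,m) with k(x) > 0 for all x ∈ X, and let u ∈ D(L) satisfy Lu(x) + k(x)u(x) ≤ 0 for all x ∈ X. Then u(x) ≤ 0 for all x ∈ X. -/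
open scoped BigOperators

/-- maximum principle: if `u ∈ D(L)` satisfies
`Lu(x) + k(x) u(x) ≤ 0` for all `x`, then `u ≤ 0`. -/
theorem stmt12 {X : Type*} [Countable X] (b : X → X → ℝ) (m : X → ℝ)
    (hb : IsGraph b) (hconn : GraphConnected b) (hm : FinMeasure m)
    (hcc : CanCompact b m) (k : X → ℝ) (hk2 : MemL2 m k) (hkpos : ∀ x, 0 < k x)
    (u f : X → ℝ) (hu : IsLap b m u f) (hineq : ∀ x, f x + k x * u x ≤ 0) :
    ∀ x, u x ≤ 0 := by
  -- Let `v = u⁺ = max u 0`.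
  set v : X → ℝ := fun x => max (u x) 0 with hv
  obtain ⟨⟨hu2, huE⟩, hf2, hlap⟩ := hu
  -- v ∈ ℓ²
  have hv2 : MemL2 m v := by
    apply Summable.of_nonneg_of_le (fun x => ?_) (fun x => ?_) hu2
    · exact mul_nonneg (sq_nonneg _) (hm.pos x).le
    · apply mul_le_mul_of_nonneg_right _ (hm.pos x).le
      have h1 : |v x| ≤ |u x| := by
        simp only [hv]
        rw [abs_of_nonneg (le_max_right _ _)]
        exact max_le (le_abs_self _) (abs_nonneg _)
      calc v x ^ 2 = |v x| ^ 2 := (sq_abs _).symm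
        _ ≤ |u x| ^ 2 := pow_le_pow_left₀ (abs_nonneg _) h1 2
        _ = u x ^ 2 := sq_abs _
  -- v has finite energy
  have hvE : FinEnergy b v := by
    apply Summable.of_nonneg_of_le (fun p => ?_) (fun p => ?_) huE
    · exact mul_nonneg (hb.nonneg _ _) (sq_nonneg _)
    · apply mul_le_mul_of_nonneg_left _ (hb.nonneg _ _)
      have h1 : |v p.1 - v p.2| ≤ |u p.1 - u p.2| := abs_max_sub_max_le_abs _ _ _
      calc (v p.1 - v p.2) ^ 2 = |v p.1 - v p.2| ^ 2 := (sq_abs _).symm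
        _ ≤ |u p.1 - u p.2| ^ 2 := pow_le_pow_left₀ (abs_nonneg _) h1 2
        _ = (u p.1 - u p.2) ^ 2 := sq_abs _
  -- the bilinear form Q(u, v) is nonnegative
  have hQnn : 0 ≤ energyBil b u v := by
    apply mul_nonneg (by norm_num)
    apply tsum_nonneg
    intro p
    rw [mul_assoc]
    apply mul_nonneg (hb.nonneg _ _)
    rcases le_total (u p.1) (u p.2) with h | h
    · have h2 : v p.1 ≤ v p.2 := max_le_max h le_rfl
      nlinarith
    · have h2 : v p.2 ≤ v p.1 := max_le_max h le_rfl
      nlinarith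
  -- summability of f * v * m
  have hfvm : Summable (fun x => f x * v x * m x) := by
    have hmaj : Summable (fun x => (f x ^ 2 * m x + v x ^ 2 * m x) / 2) :=
      (hf2.add hv2).div_const 2
    have habs : Summable (fun x => |f x * v x * m x|) := by
      apply Summable.of_nonneg_of_le (fun x => abs_nonneg _) (fun x => ?_) hmaj
      rw [abs_mul, abs_mul, abs_of_nonneg (hm.pos x).le]
      nlinarith [sq_nonneg (|f x| - |v x|), sq_abs (f x), sq_abs (v x), (hm.pos x).le,
        mul_nonneg (mul_nonneg (abs_nonneg (f x)) (abs_nonneg (v x))) (hm.pos x).le,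
        sq_nonneg (|f x| - |v x|), mul_le_mul_of_nonneg_right (sq_nonneg (|f x| - |v x|)) (hm.pos x).le]
    exact habs.of_abs
  -- Q(u,v) = ⟨f, v⟩, so ⟨f, v⟩ ≥ 0; but each term is ≤ -k v² m ≤ 0
  have hkey : 0 ≤ ∑' x, f x * v x * m x := by
    rw [← hlap v ⟨hv2, hvE⟩]; exact hQnn
  intro x
  by_contra hpos
  push_neg at hpos
  have huv : ∀ y, u y * v y = v y ^ 2 := by
    intro y
    rcases le_total (u y) 0 with h | h
    · simp [hv, max_eq_right h]
    · simp [hv, max_eq_left h, sq]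
  have hterm : ∀ y, f y * v y * m y ≤ -(k y * v y ^ 2 * m y) := by
    intro y
    have h1 : f y ≤ -(k y * u y) := by linarith [hineq y]
    have hvnn : 0 ≤ v y := le_max_right _ _
    have := mul_le_mul_of_nonneg_right (mul_le_mul_of_nonneg_right h1 hvnn) (hm.pos y).le
    calc f y * v y * m y ≤ -(k y * u y) * v y * m y := this
      _ = -(k y * v y ^ 2 * m y) := by
          have h4 : k y * u y * v y = k y * v y ^ 2 := by rw [mul_assoc, huv y]
          linear_combination (-(m y)) * h4
  -- so each term nonpositive, tsum ≥ 0, hence each term = 0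
  have hle : ∑' y, f y * v y * m y ≤ f x * v x * m x := by
    have hng : Summable (fun y => -(f y * v y * m y)) := hfvm.neg
    have hnn : ∀ y, 0 ≤ -(f y * v y * m y) := by
      intro y
      have h1 := hterm y
      have h2 : 0 ≤ k y * v y ^ 2 * m y :=
        mul_nonneg (mul_nonneg (hkpos y).le (sq_nonneg _)) (hm.pos y).le
      linarith
    have h3 := Summable.le_tsum hng x fun y _ => hnn y
    rw [tsum_neg] at h3
    linarith
  have hx0 : 0 < k x * v x ^ 2 * m x := by
    have hvx : 0 < v x := lt_max_of_lt_left hpos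
    have := hkpos x
    have := hm.pos x
    positivity
  linarith [hterm x, hkey, hle]
end

section
/- Let b be a connected, canonically compactifiable graph over a finite discrete measure space (X,m), and let h ∈ ℓ²(X,m) with h̄ < 0. Then for every c < 0 and every M ∈ ℝ there exists a lower solution u₀ ∈ D(L) for the equation Lu = h e^u − c with u₀(x) ≤ M for all x ∈ X. -/
open scoped BigOperators

/-! ### Auxiliary lemmas -/

open Function
open scoped ENNReal

section SumType

private lemma hasSum_sumType {α β : Type*} {f : α ⊕ β → ℝ} {s t : ℝ}
    (h1 : HasSum (fun a => f (Sum.inl a)) s) (h2 : HasSum (fun c => f (Sum.inr c)) t) :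
    HasSum f (s + t) := by
  have e1 : HasSum (f ∘ ((↑) : Set.range (Sum.inl : α → α ⊕ β) → α ⊕ β)) s :=
    (Function.Injective.hasSum_range_iff Sum.inl_injective).mpr h1
  have e2 : HasSum (f ∘ ((↑) : ↥(Set.range (Sum.inl : α → α ⊕ β))ᶜ → α ⊕ β)) t := by
    have := (Function.Injective.hasSum_range_iff (f := f) Sum.inr_injective).mpr h2
    rw [Set.compl_range_inl]
    exact this
  exact e1.add_compl e2

private lemma summable_sumType {α β : Type*} {f : α ⊕ β → ℝ}
    (h1 : Summable fun a => f (Sum.inl a)) (h2 : Summable fun c => f (Sum.inr c)) :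
    Summable f :=
  (hasSum_sumType h1.hasSum h2.hasSum).summable

private lemma tsum_sumType {α β : Type*} {f : α ⊕ β → ℝ} (hf : Summable f) :
    ∑' i, f i = (∑' a, f (Sum.inl a)) + (∑' c, f (Sum.inr c)) := by
  have h1 : Summable fun a => f (Sum.inl a) := hf.comp_injective Sum.inl_injective
  have h2 : Summable fun c => f (Sum.inr c) := hf.comp_injective Sum.inr_injective
  exact (hasSum_sumType h1.hasSum h2.hasSum).tsum_eq

private lemma continuous_eval {ι : Type*} (i : ι) :
    Continuous fun F : lp (fun _ : ι => ℝ) 2 => F i := by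
  have : LipschitzWith 1 (fun F : lp (fun _ : ι => ℝ) 2 => F i) := by
    apply LipschitzWith.of_dist_le_mul
    intro F G
    rw [NNReal.coe_one, one_mul, dist_eq_norm, dist_eq_norm]
    have := lp.norm_apply_le_norm (E := fun _ : ι => ℝ) (by norm_num : (2:ℝ≥0∞) ≠ 0) (F - G) i
    simpa [lp.coeFn_sub] using this
  exact this.continuous

private lemma normsq_eq (r : ℝ) : ‖r‖ ^ (2:ℝ≥0∞).toReal = r ^ 2 := by
  rw [ENNReal.toReal_ofNat, Real.norm_eq_abs, show ((2:ℝ)) = ((2:ℕ):ℝ) by norm_num,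
    Real.rpow_natCast, sq_abs]

end SumType

section Jmap

variable {X : Type*} (b : X → X → ℝ) (m : X → ℝ)

/-- The isometric embedding of `D(Q)` into `ℓ²(X ⊕ X×X)`. -/
private noncomputable def jmap (u : X → ℝ) : X ⊕ X × X → ℝ :=
  Sum.elim (fun x => u x * Real.sqrt (m x))
    (fun p => (u p.1 - u p.2) * Real.sqrt (b p.1 p.2 / 2))

variable {b m}

private lemma jmap_inl_sq (hm : FinMeasure m) (u : X → ℝ) (x : X) :
    jmap b m u (Sum.inl x) ^ 2 = u x ^ 2 * m x := by
  simp only [jmap, Sum.elim_inl, mul_pow, Real.sq_sqrt (hm.pos x).le]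

private lemma jmap_inr_sq (hb : IsGraph b) (u : X → ℝ) (p : X × X) :
    jmap b m u (Sum.inr p) ^ 2 = (1/2) * (b p.1 p.2 * (u p.1 - u p.2) ^ 2) := by
  have h0 : (0:ℝ) ≤ b p.1 p.2 / 2 := by have := hb.nonneg p.1 p.2; linarith
  simp only [jmap, Sum.elim_inr, mul_pow, Real.sq_sqrt h0]
  ring

private lemma memℓp_jmap (hb : IsGraph b) (hm : FinMeasure m) {u : X → ℝ}
    (hu : MemDQ b m u) : Memℓp (jmap b m u) 2 := by
  apply memℓp_gen
  have hs : Summable fun i => jmap b m u i ^ 2 := by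
    apply summable_sumType
    · exact Summable.congr hu.1 fun x => (jmap_inl_sq hm u x).symm
    · exact Summable.congr (hu.2.mul_left (1/2)) fun p => (jmap_inr_sq hb u p).symm
  exact Summable.congr hs fun i => (normsq_eq _).symm

private lemma memDQ_of_memℓp (hb : IsGraph b) (hm : FinMeasure m) {u : X → ℝ}
    (hu : Memℓp (jmap b m u) 2) : MemDQ b m u := by
  have hs : Summable fun i => jmap b m u i ^ 2 := by
    have h2 : (0:ℝ) < (2:ℝ≥0∞).toReal := by simp [ENNReal.toReal_ofNat]
    have := (memℓp_gen_iff h2).mp hu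
    exact Summable.congr this fun i => normsq_eq _
  constructor
  · exact Summable.congr (hs.comp_injective Sum.inl_injective) fun x => jmap_inl_sq hm u x
  · have := hs.comp_injective Sum.inr_injective
    have h2 := this.mul_left 2
    refine Summable.congr h2 fun p => ?_
    rw [comp_apply, jmap_inr_sq hb u p]
    ring

/-- The closed subspace of `ℓ²(X ⊕ X×X)` which is the image of `D(Q)`. -/
private noncomputable def Vsub : Submodule ℝ (lp (fun _ : X ⊕ X × X => ℝ) 2) where
  carrier := {F | ∀ p : X × X,
    F (Sum.inr p) * (Real.sqrt (m p.1) * Real.sqrt (m p.2)) =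
      (F (Sum.inl p.1) * Real.sqrt (m p.2) - F (Sum.inl p.2) * Real.sqrt (m p.1)) *
        Real.sqrt (b p.1 p.2 / 2)}
  add_mem' := by
    intro F G hF hG p
    simp only [lp.coeFn_add, Pi.add_apply]
    linear_combination (hF p) + (hG p)
  zero_mem' := by intro p; simp
  smul_mem' := by
    intro c F hF p
    simp only [lp.coeFn_smul, Pi.smul_apply, smul_eq_mul]
    linear_combination c * (hF p)

private lemma isClosed_Vsub : IsClosed ((Vsub (b := b) (m := m) : Set (lp (fun _ : X ⊕ X × X => ℝ) 2))) := by
  have : (Vsub (b := b) (m := m) : Set (lp (fun _ : X ⊕ X × X => ℝ) 2)) =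
      ⋂ p : X × X, {F : lp (fun _ : X ⊕ X × X => ℝ) 2 |
        F (Sum.inr p) * (Real.sqrt (m p.1) * Real.sqrt (m p.2)) =
          (F (Sum.inl p.1) * Real.sqrt (m p.2) - F (Sum.inl p.2) * Real.sqrt (m p.1)) *
            Real.sqrt (b p.1 p.2 / 2)} := by
    ext F
    simp only [Set.mem_iInter, Set.mem_setOf_eq]
    rfl
  rw [this]
  refine isClosed_iInter fun p => isClosed_eq ?_ ?_
  · exact (continuous_eval (Sum.inr p)).mul continuous_const
  · exact (((continuous_eval (Sum.inl p.1)).mul continuous_const).sub (G := ℝ)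
      ((continuous_eval (Sum.inl p.2)).mul continuous_const)).mul continuous_const

private lemma jmap_mem_Vsub (hu : Memℓp (jmap b m u) 2) :
    (⟨jmap b m u, hu⟩ : lp (fun _ : X ⊕ X × X => ℝ) 2) ∈ Vsub (b := b) (m := m) := by
  intro p
  show jmap b m u (Sum.inr p) * (Real.sqrt (m p.1) * Real.sqrt (m p.2)) =
    (jmap b m u (Sum.inl p.1) * Real.sqrt (m p.2) -
      jmap b m u (Sum.inl p.2) * Real.sqrt (m p.1)) * Real.sqrt (b p.1 p.2 / 2)
  simp only [jmap, Sum.elim_inl, Sum.elim_inr]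
  ring

private lemma eq_jmap_of_mem (hm : FinMeasure m) {F : lp (fun _ : X ⊕ X × X => ℝ) 2}
    (hF : F ∈ Vsub (b := b) (m := m)) (i : X ⊕ X × X) :
    F i = jmap b m (fun x => F (Sum.inl x) / Real.sqrt (m x)) i := by
  rcases i with x | p
  · have h1 : Real.sqrt (m x) ≠ 0 := ne_of_gt (Real.sqrt_pos.mpr (hm.pos x))
    simp only [jmap, Sum.elim_inl]
    rw [div_mul_cancel₀ _ h1]
  · have h1 : Real.sqrt (m p.1) ≠ 0 := ne_of_gt (Real.sqrt_pos.mpr (hm.pos p.1))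
    have h2 : Real.sqrt (m p.2) ≠ 0 := ne_of_gt (Real.sqrt_pos.mpr (hm.pos p.2))
    have hFp := hF p
    simp only [jmap, Sum.elim_inr]
    rw [div_sub_div _ _ h1 h2, div_mul_eq_mul_div, eq_div_iff (mul_ne_zero h1 h2)]
    linear_combination hFp

private lemma inner_jmap_jmap (hb : IsGraph b) (hm : FinMeasure m) {u v : X → ℝ}
    (hu : Memℓp (jmap b m u) 2) (hv : Memℓp (jmap b m v) 2) :
    (inner (𝕜 := ℝ) (⟨jmap b m u, hu⟩ : lp (fun _ : X ⊕ X × X => ℝ) 2)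
        (⟨jmap b m v, hv⟩ : lp (fun _ : X ⊕ X × X => ℝ) 2)) =
      (∑' x, u x * v x * m x) + energyBil b u v := by
  have hsum : Summable fun i => jmap b m u i * jmap b m v i := by
    have := lp.summable_inner (𝕜 := ℝ) (⟨jmap b m u, hu⟩ : lp (fun _ : X ⊕ X × X => ℝ) 2)
      (⟨jmap b m v, hv⟩ : lp (fun _ : X ⊕ X × X => ℝ) 2)
    simpa [RCLike.inner_apply, conj_trivial, mul_comm] using this
  rw [lp.inner_eq_tsum]
  simp only [RCLike.inner_apply, conj_trivial]
  refine (tsum_congr fun i => mul_comm _ _).trans ?_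
  rw [tsum_sumType hsum]
  congr 1
  · refine tsum_congr fun x => ?_
    simp only [jmap, Sum.elim_inl]
    rw [show u x * Real.sqrt (m x) * (v x * Real.sqrt (m x)) =
      u x * v x * (Real.sqrt (m x) * Real.sqrt (m x)) by ring, Real.mul_self_sqrt (hm.pos x).le]
  · rw [energyBil, ← tsum_mul_left]
    refine tsum_congr fun p => ?_
    have h0 : (0:ℝ) ≤ b p.1 p.2 / 2 := by have := hb.nonneg p.1 p.2; linarith
    simp only [jmap, Sum.elim_inr]
    rw [show (u p.1 - u p.2) * Real.sqrt (b p.1 p.2 / 2) * ((v p.1 - v p.2) *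
      Real.sqrt (b p.1 p.2 / 2)) = (u p.1 - u p.2) * (v p.1 - v p.2) *
      (Real.sqrt (b p.1 p.2 / 2) * Real.sqrt (b p.1 p.2 / 2)) by ring,
      Real.mul_self_sqrt h0]
    ring

end Jmap

section Poisson

variable {X : Type*} {b : X → X → ℝ} {m : X → ℝ}

/-- Solvability of `(L+1)w = g` via orthogonal projection. -/
private lemma poisson (hb : IsGraph b) (hm : FinMeasure m) (g : X → ℝ) (hg : MemL2 m g) :
    ∃ w : X → ℝ, MemDQ b m w ∧ ∀ v : X → ℝ, MemDQ b m v →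
      energyBil b w v + ∑' x, w x * v x * m x = ∑' x, g x * v x * m x := by
  classical
  set G0fun : X ⊕ X × X → ℝ := Sum.elim (fun x => g x * Real.sqrt (m x)) (fun _ => 0) with hG0fun
  have hG0mem : Memℓp G0fun 2 := by
    apply memℓp_gen
    have hs : Summable fun i => G0fun i ^ 2 := by
      apply summable_sumType
      · refine Summable.congr hg fun x => ?_
        simp only [hG0fun, Sum.elim_inl, mul_pow, Real.sq_sqrt (hm.pos x).le]
      · simpa [hG0fun] using (summable_zero : Summable (fun _ : X × X => (0:ℝ)))
    exact Summable.congr hs fun i => (normsq_eq _).symm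
  set G0 : lp (fun _ : X ⊕ X × X => ℝ) 2 := ⟨G0fun, hG0mem⟩ with hG0
  haveI : CompleteSpace (Vsub (b := b) (m := m)) :=
    (isClosed_Vsub (b := b) (m := m)).completeSpace_coe
  set P : lp (fun _ : X ⊕ X × X => ℝ) 2 := ↑(Submodule.orthogonalProjectionOnto (Vsub (b := b) (m := m)) G0)
    with hP
  have hPmem : P ∈ Vsub (b := b) (m := m) := (Submodule.orthogonalProjectionOnto (Vsub (b := b) (m := m)) G0).2
  set w : X → ℝ := fun x => P (Sum.inl x) / Real.sqrt (m x) with hw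
  have hPj : ∀ i, P i = jmap b m w i := eq_jmap_of_mem hm hPmem
  have hwmem : Memℓp (jmap b m w) 2 := by
    have : (jmap b m w : X ⊕ X × X → ℝ) = ⇑P := funext fun i => (hPj i).symm
    rw [this]
    exact lp.memℓp P
  have hPeq : P = (⟨jmap b m w, hwmem⟩ : lp (fun _ : X ⊕ X × X => ℝ) 2) :=
    Subtype.ext (funext hPj)
  refine ⟨w, memDQ_of_memℓp hb hm hwmem, fun v hv => ?_⟩
  have hvmem : Memℓp (jmap b m v) 2 := memℓp_jmap hb hm hv
  set jv : lp (fun _ : X ⊕ X × X => ℝ) 2 := ⟨jmap b m v, hvmem⟩ with hjv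
  have hjvV : jv ∈ Vsub (b := b) (m := m) := jmap_mem_Vsub hvmem
  have horth : (inner (𝕜 := ℝ) (G0 - P) jv) = 0 :=
    Submodule.starProjection_inner_eq_zero (K := Vsub (b := b) (m := m)) G0 jv hjvV
  have hinner : (inner (𝕜 := ℝ) P jv) = (inner (𝕜 := ℝ) G0 jv) := by
    have := inner_sub_left (𝕜 := ℝ) G0 P jv
    rw [horth] at this
    linarith [this]
  have hleft : (inner (𝕜 := ℝ) P jv) = (∑' x, w x * v x * m x) + energyBil b w v := by
    rw [hPeq]
    exact inner_jmap_jmap hb hm hwmem hvmem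
  have hright : (inner (𝕜 := ℝ) G0 jv) = ∑' x, g x * v x * m x := by
    have hsum : Summable fun i => G0fun i * jmap b m v i := by
      have := lp.summable_inner (𝕜 := ℝ) G0 jv
      simp only [RCLike.inner_apply, conj_trivial] at this
      exact this.congr fun i => mul_comm _ _
    rw [lp.inner_eq_tsum]
    simp only [RCLike.inner_apply, conj_trivial]
    refine (tsum_congr fun i => mul_comm _ _).trans ?_
    show ∑' i, G0fun i * jmap b m v i = _
    rw [tsum_sumType hsum]
    have h2 : (∑' p : X × X, G0fun (Sum.inr p) * jmap b m v (Sum.inr p)) = 0 := by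
      simp [hG0fun]
    rw [h2, add_zero]
    refine tsum_congr fun x => ?_
    simp only [hG0fun, Sum.elim_inl, jmap]
    rw [show g x * Real.sqrt (m x) * (v x * Real.sqrt (m x)) =
      g x * v x * (Real.sqrt (m x) * Real.sqrt (m x)) by ring, Real.mul_self_sqrt (hm.pos x).le]
  rw [hleft, hright] at hinner
  linarith [hinner]

end Poisson

section Products

private lemma summable_mul_l2 {X : Type*} {m : X → ℝ} (hm : FinMeasure m) {u v : X → ℝ}
    (hu : MemL2 m u) (hv : MemL2 m v) : Summable fun x => u x * v x * m x := by
  have hb : ∀ x, |u x * v x * m x| ≤ (1/2) * (u x ^ 2 * m x) + (1/2) * (v x ^ 2 * m x) := by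
    intro x
    rw [abs_mul, abs_mul, abs_of_nonneg (hm.pos x).le]
    have h1 : |u x| * |v x| ≤ (1/2) * (u x ^ 2 + v x ^ 2) := by
      nlinarith [sq_nonneg (|u x| - |v x|), sq_abs (u x), sq_abs (v x)]
    nlinarith [(hm.pos x).le, abs_nonneg (u x), abs_nonneg (v x),
      mul_le_mul_of_nonneg_right h1 (hm.pos x).le]
  have hsum : Summable fun x => (1/2) * (u x ^ 2 * m x) + (1/2) * (v x ^ 2 * m x) :=
    (hu.mul_left _).add (hv.mul_left _)
  exact summable_abs_iff.mp (Summable.of_nonneg_of_le (fun x => abs_nonneg _) hb hsum)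

end Products

/-- if `h̄ < 0`, then for every `c < 0` and every bound `M` there
is a lower solution `u₀ ∈ D(L)` of `Lu = h e^u - c` with `u₀ ≤ M`. -/
theorem stmt14 {X : Type*} [Countable X] (b : X → X → ℝ) (m : X → ℝ)
    (hb : IsGraph b) (hconn : GraphConnected b) (hm : FinMeasure m)
    (hcc : CanCompact b m) (h : X → ℝ) (hh2 : MemL2 m h) (hmean : mean m h < 0) :
    ∀ c : ℝ, c < 0 → ∀ M : ℝ,
      ∃ u₀ f₀ : X → ℝ, IsLap b m u₀ f₀ ∧
        (∀ x, f₀ x ≤ h x * Real.exp (u₀ x) - c) ∧ (∀ x, u₀ x ≤ M) := by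
  intro c hc M
  by_cases hX : IsEmpty X
  · refine ⟨0, 0, ⟨⟨?_, ?_⟩, ?_, ?_⟩, fun x => (hX.false x).elim, fun x => (hX.false x).elim⟩
    · simpa [MemL2] using summable_zero
    · simpa [FinEnergy] using summable_zero
    · simpa [MemL2] using summable_zero
    · intro v hv
      simp [energyBil]
  haveI : Nonempty X := not_isEmpty_iff.mp hX
  set g : X → ℝ := fun x => min (h x) 0 with hgdef
  have hg2 : MemL2 m g := by
    refine Summable.of_nonneg_of_le (fun x => mul_nonneg (sq_nonneg _) (hm.pos x).le) (fun x => ?_) hh2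
    have habs : |g x| ≤ |h x| := by
      rcases le_or_gt (h x) 0 with hx | hx
      · simp [hgdef, min_eq_left hx]
      · simp [hgdef, min_eq_right hx.le, abs_nonneg]
    have : g x ^ 2 ≤ h x ^ 2 := by
      nlinarith [sq_abs (g x), sq_abs (h x), abs_nonneg (g x), abs_nonneg (h x)]
    exact mul_le_mul_of_nonneg_right this (hm.pos x).le
  obtain ⟨w, hwDQ, hwEq⟩ := poisson hb hm g hg2
  obtain ⟨W, hW⟩ := hcc w hwDQ
  have hWnn : 0 ≤ W := le_trans (abs_nonneg _) (hW (Classical.arbitrary X))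
  set δ : ℝ := min (-c / (W + 1)) (Real.exp M) with hδdef
  have hδpos : 0 < δ :=
    lt_min (div_pos (neg_pos.mpr hc) (by linarith)) (Real.exp_pos M)
  have hδW : δ * (W + 1) ≤ -c := by
    have h1 : δ ≤ -c / (W + 1) := min_le_left _ _
    have h2 : δ * (W + 1) ≤ (-c / (W + 1)) * (W + 1) :=
      mul_le_mul_of_nonneg_right h1 (by linarith)
    rwa [div_mul_cancel₀ _ (by linarith : W + 1 ≠ 0)] at h2
  have hδM : Real.log δ ≤ M := by
    have h1 : δ ≤ Real.exp M := min_le_right _ _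
    calc Real.log δ ≤ Real.log (Real.exp M) := Real.log_le_log hδpos h1
    _ = M := Real.log_exp M
  set t : ℝ := Real.log δ - δ * W with htdef
  have hu0le : ∀ x, δ * w x + t ≤ Real.log δ := by
    intro x
    have h1 : w x ≤ W := le_trans (le_abs_self _) (hW x)
    have h2 : δ * w x ≤ δ * W := mul_le_mul_of_nonneg_left h1 hδpos.le
    simp only [htdef]
    linarith
  have hexple : ∀ x, Real.exp (δ * w x + t) ≤ δ := by
    intro x
    calc Real.exp (δ * w x + t) ≤ Real.exp (Real.log δ) := Real.exp_le_exp.mpr (hu0le x)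
    _ = δ := Real.exp_log hδpos
  refine ⟨fun x => δ * w x + t, fun x => δ * (g x - w x), ⟨⟨?_, ?_⟩, ?_, ?_⟩, ?_, ?_⟩
  · -- MemL2 u₀
    refine Summable.of_nonneg_of_le (fun x => mul_nonneg (sq_nonneg _) (hm.pos x).le) (fun x => ?_)
      (((hwDQ.1.mul_left (2 * δ ^ 2)).add (hm.summable.mul_left (2 * t ^ 2))))
    have h1 : (δ * w x + t) ^ 2 ≤ 2 * (δ * w x) ^ 2 + 2 * t ^ 2 := by
      nlinarith [sq_nonneg (δ * w x - t)]
    have h2 := mul_le_mul_of_nonneg_right h1 (hm.pos x).le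
    calc (δ * w x + t) ^ 2 * m x ≤ (2 * (δ * w x) ^ 2 + 2 * t ^ 2) * m x := h2
    _ = 2 * δ ^ 2 * (w x ^ 2 * m x) + 2 * t ^ 2 * m x := by ring
  · -- FinEnergy u₀
    refine Summable.congr (hwDQ.2.mul_left (δ ^ 2)) fun p => ?_
    ring
  · -- MemL2 f₀
    refine Summable.of_nonneg_of_le (fun x => mul_nonneg (sq_nonneg _) (hm.pos x).le) (fun x => ?_)
      (((hg2.mul_left (2 * δ ^ 2)).add (hwDQ.1.mul_left (2 * δ ^ 2))))
    have h1 : (δ * (g x - w x)) ^ 2 ≤ 2 * δ ^ 2 * g x ^ 2 + 2 * δ ^ 2 * w x ^ 2 := by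
      nlinarith [sq_nonneg (g x + w x), sq_nonneg δ]
    have h2 := mul_le_mul_of_nonneg_right h1 (hm.pos x).le
    calc (δ * (g x - w x)) ^ 2 * m x ≤ (2 * δ ^ 2 * g x ^ 2 + 2 * δ ^ 2 * w x ^ 2) * m x := h2
    _ = 2 * δ ^ 2 * (g x ^ 2 * m x) + 2 * δ ^ 2 * (w x ^ 2 * m x) := by ring
  · -- weak equation
    intro v hv
    have hgv : Summable fun x => g x * v x * m x := summable_mul_l2 hm hg2 hv.1
    have hwv : Summable fun x => w x * v x * m x := summable_mul_l2 hm hwDQ.1 hv.1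
    have e1 : energyBil b (fun x => δ * w x + t) v = δ * energyBil b w v := by
      rw [energyBil, energyBil, ← tsum_mul_left, ← tsum_mul_left,  ← tsum_mul_left]
      refine tsum_congr fun p => ?_
      ring
    have e2 : energyBil b w v = (∑' x, g x * v x * m x) - ∑' x, w x * v x * m x := by
      have := hwEq v hv
      linarith
    rw [e1, e2]
    have e3 : (∑' x, δ * (g x - w x) * v x * m x) =
        δ * ((∑' x, g x * v x * m x) - ∑' x, w x * v x * m x) := by
      rw [← Summable.tsum_sub hgv hwv, ← tsum_mul_left]
      refine tsum_congr fun x => ?_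
      ring
    rw [e3]
  · -- lower solution inequality
    intro x
    have hwx := hW x
    have hexp := hexple x
    have hexppos := Real.exp_pos (δ * w x + t)
    have hmw : -(δ * w x) ≤ δ * W := by
      have h1 : -W ≤ w x := neg_le_of_abs_le hwx
      nlinarith
    have hδWc : δ * W + c ≤ 0 := by nlinarith
    show δ * (g x - w x) ≤ h x * Real.exp (δ * w x + t) - c
    rcases le_or_gt 0 (h x) with hx | hx
    · have hgx : g x = 0 := min_eq_right hx
      rw [hgx]
      have h1 : 0 ≤ h x * Real.exp (δ * w x + t) := mul_nonneg hx hexppos.le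
      nlinarith
    · have hgx : g x = h x := min_eq_left hx.le
      rw [hgx]
      have h1 : h x * δ ≤ h x * Real.exp (δ * w x + t) :=
        mul_le_mul_of_nonpos_left hexp hx.le
      nlinarith
  · -- u₀ ≤ M
    intro x
    exact le_trans (hu0le x) hδM
end

section
/- Let b be a connected, canonically compactifiable graph over a finite discrete measure space (X,m), and let h ∈ ℓ²(X,m) with h̄ < 0 and h(x₀) > 0 for some x₀ ∈ X. Then the set B := {v ∈ D(Q) : ⟨h e^v, 1⟩ = 0 and ⟨v, 1⟩ = 0} is nonempty. -/
open scoped BigOperators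

section AuxStmt16

variable {X : Type*}

lemma finEnergy_single_stmt16 [DecidableEq X] {b : X → X → ℝ} (hb : IsGraph b) (z : X) (c : ℝ) :
    FinEnergy b (fun x => if x = z then c else 0) := by
  have hcol : Summable (fun a => b a z) :=
    ((hb.row_summable z).congr (fun a => hb.symm z a))
  have hind : Summable (fun a : X => if a = z then (1:ℝ) else 0) :=
    summable_of_ne_finset_zero (s := {z}) (by intro a ha; simp at ha; simp [ha])
  have hG1 : Summable (fun p : X × X => (if p.1 = z then (1:ℝ) else 0) * b z p.2) :=
    hind.mul_of_nonneg (hb.row_summable z)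
      (fun a => by positivity) (fun a => hb.nonneg z a)
  have hG2 : Summable (fun p : X × X => b p.1 z * (if p.2 = z then (1:ℝ) else 0)) :=
    hcol.mul_of_nonneg hind (fun a => hb.nonneg a z) (fun a => by positivity)
  have hsum : Summable (fun p : X × X =>
      c ^ 2 * ((if p.1 = z then (1:ℝ) else 0) * b z p.2
        + b p.1 z * (if p.2 = z then (1:ℝ) else 0))) :=
    (hG1.add hG2).mul_left (c ^ 2)
  refine Summable.of_nonneg_of_le (fun p => mul_nonneg (hb.nonneg _ _) (sq_nonneg _))
    (fun p => ?_) hsum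
  by_cases h1 : p.1 = z <;> by_cases h2 : p.2 = z <;>
    simp [h1, h2, hb.diag] <;> nlinarith [hb.nonneg z p.2, hb.nonneg p.1 z, sq_nonneg c]

lemma finEnergy_add_stmt16 {b : X → X → ℝ} (hb : IsGraph b) {u w : X → ℝ}
    (hu : FinEnergy b u) (hw : FinEnergy b w) : FinEnergy b (fun x => u x + w x) := by
  have hsum : Summable (fun p : X × X =>
      2 * (b p.1 p.2 * (u p.1 - u p.2) ^ 2) + 2 * (b p.1 p.2 * (w p.1 - w p.2) ^ 2)) :=
    (hu.mul_left 2).add (hw.mul_left 2)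
  refine Summable.of_nonneg_of_le (fun p => mul_nonneg (hb.nonneg _ _) (sq_nonneg _))
    (fun p => ?_) hsum
  show b p.1 p.2 * ((u p.1 + w p.1) - (u p.2 + w p.2)) ^ 2 ≤ _
  nlinarith [mul_nonneg (hb.nonneg p.1 p.2) (sq_nonneg ((u p.1 - u p.2) - (w p.1 - w p.2)))]

end AuxStmt16

/-- the constraint set
`B = {v ∈ D(Q) : ⟨h e^v, 1⟩ = 0, ⟨v, 1⟩ = 0}` is nonempty. -/
theorem stmt16 {X : Type*} [Countable X] (b : X → X → ℝ) (m : X → ℝ)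
    (hb : IsGraph b) (hconn : GraphConnected b) (hm : FinMeasure m)
    (hcc : CanCompact b m) (h : X → ℝ) (hh2 : MemL2 m h)
    (hmean : mean m h < 0) (hpos : ∃ x₀, 0 < h x₀) :
    ∃ v : X → ℝ, MemDQ b m v ∧
      (∑' x, h x * Real.exp (v x) * m x) = 0 ∧ (∑' x, v x * m x) = 0 := by
  classical
  obtain ⟨x₀, hx0⟩ := hpos
  -- h is ℓ¹
  have hm1 : Summable (fun x => h x * m x) := by
    have habs : Summable (fun x => |h x * m x|) := by
      refine Summable.of_nonneg_of_le (fun x => abs_nonneg _) (fun x => ?_)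
        (hh2.add hm.summable)
      rw [abs_mul, abs_of_pos (hm.pos x)]
      have h1 : |h x| ≤ h x ^ 2 + 1 := by nlinarith [sq_nonneg (|h x| - 1), sq_abs (h x)]
      have := mul_le_mul_of_nonneg_right h1 (hm.pos x).le
      linarith [this]
    exact summable_abs_iff.mp habs
  set S : ℝ := ∑' x, h x * m x with hSdef
  have hM : 0 < ∑' x, m x := Summable.tsum_pos hm.summable (fun x => (hm.pos x).le) x₀ (hm.pos x₀)
  have hS : S < 0 := by
    unfold mean at hmean
    have := mul_neg_of_neg_of_pos hmean hM
    rwa [div_mul_cancel₀ _ (ne_of_gt hM)] at this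
  -- there is a second point
  have hx1ex : ∃ x₁, x₁ ≠ x₀ := by
    by_contra hc
    push_neg at hc
    have : S = h x₀ * m x₀ := tsum_eq_single x₀ (fun y hy => absurd (hc y) hy)
    nlinarith [mul_pos hx0 (hm.pos x₀)]
  obtain ⟨x₁, hx01⟩ := hx1ex
  set α : ℝ := m x₀ / m x₁ with hαdef
  have hα : 0 < α := div_pos (hm.pos x₀) (hm.pos x₁)
  set A : ℝ := h x₀ * m x₀ with hAdef
  set B : ℝ := h x₁ * m x₁ with hBdef
  set C : ℝ := S - A - B with hCdef
  have hA : 0 < A := mul_pos hx0 (hm.pos x₀)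
  -- family of test functions
  set v : ℝ → X → ℝ := fun t x =>
    (if x = x₀ then t else 0) + (if x = x₁ then -(α * t) else 0) with hvdef
  have hv0 : ∀ t, v t x₀ = t := by intro t; simp [hvdef, Ne.symm hx01]
  have hv1 : ∀ t, v t x₁ = -(α * t) := by intro t; simp [hvdef, hx01]
  have hvz : ∀ t x, x ≠ x₀ → x ≠ x₁ → v t x = 0 := by
    intro t x h0 h1; simp [hvdef, h0, h1]
  set F : ℝ → ℝ := fun t => A * Real.exp t + B * Real.exp (-(α * t)) + C with hFdef
  -- key tsum computation
  have key : ∀ t : ℝ, (∑' x, h x * Real.exp (v t x) * m x) = F t := by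
    intro t
    have hd : Summable (fun x => h x * (Real.exp (v t x) - 1) * m x) := by
      refine summable_of_ne_finset_zero (s := {x₀, x₁}) (fun x hx => ?_)
      simp only [Finset.mem_insert, Finset.mem_singleton, not_or] at hx
      rw [hvz t x hx.1 hx.2]
      simp
    have hre : (fun x => h x * Real.exp (v t x) * m x)
        = fun x => h x * m x + h x * (Real.exp (v t x) - 1) * m x := by
      funext x; ring
    rw [hre, Summable.tsum_add hm1 hd]
    have hdsum : (∑' x, h x * (Real.exp (v t x) - 1) * m x)
        = h x₀ * (Real.exp (v t x₀) - 1) * m x₀ + h x₁ * (Real.exp (v t x₁) - 1) * m x₁ := by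
      rw [tsum_eq_sum (s := {x₀, x₁}) (fun x hx => by
        simp only [Finset.mem_insert, Finset.mem_singleton, not_or] at hx
        rw [hvz t x hx.1 hx.2]; simp)]
      exact Finset.sum_pair (Ne.symm hx01)
    rw [hdsum, hv0, hv1]
    simp only [hFdef, hCdef, hAdef, hBdef]
    ring
  have hF0 : F 0 = S := by simp [hFdef, hCdef]
  have hFc : Continuous F := by fun_prop
  -- find T with F T > 0
  set T : ℝ := max 1 (Real.log ((|B| + |C| + 1) / A)) with hTdef
  have hT0 : (0:ℝ) ≤ T := le_trans zero_le_one (le_max_left _ _)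
  have hFT : 0 < F T := by
    have hR : 0 < (|B| + |C| + 1) / A := by positivity
    have h1 : (|B| + |C| + 1) / A ≤ Real.exp T := by
      rw [← Real.exp_log hR]
      exact Real.exp_le_exp.mpr (le_max_right _ _)
    have h2 : |B| + |C| + 1 ≤ A * Real.exp T := by
      rw [div_le_iff₀ hA] at h1; linarith
    have he1 : Real.exp (-(α * T)) ≤ 1 := by
      rw [Real.exp_le_one_iff]
      exact neg_nonpos_of_nonneg (mul_nonneg hα.le hT0)
    have h3 : -|B| ≤ B * Real.exp (-(α * T)) := by
      nlinarith [neg_abs_le B, (Real.exp_pos (-(α * T))).le, he1, abs_nonneg B]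
    have h4 : -|C| ≤ C := neg_abs_le C
    simp only [hFdef]
    linarith
  -- IVT
  have h0mem : (0:ℝ) ∈ Set.Icc (F 0) (F T) := ⟨by rw [hF0]; exact hS.le, hFT.le⟩
  obtain ⟨t, _, ht⟩ := intermediate_value_Icc hT0 hFc.continuousOn h0mem
  refine ⟨v t, ⟨?_, ?_⟩, ?_, ?_⟩
  · -- MemL2
    refine summable_of_ne_finset_zero (s := {x₀, x₁}) (fun x hx => ?_)
    simp only [Finset.mem_insert, Finset.mem_singleton, not_or] at hx
    rw [hvz t x hx.1 hx.2]
    simp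
  · -- FinEnergy
    exact finEnergy_add_stmt16 hb (finEnergy_single_stmt16 hb x₀ t)
      (finEnergy_single_stmt16 hb x₁ (-(α * t)))
  · rw [key t, ht]
  · rw [tsum_eq_sum (s := {x₀, x₁}) (fun x hx => by
      simp only [Finset.mem_insert, Finset.mem_singleton, not_or] at hx
      rw [hvz t x hx.1 hx.2]; simp),
      Finset.sum_pair (Ne.symm hx01), hv0, hv1]
    field_simp [hαdef, (hm.pos x₁).ne']
    rw [hαdef, div_mul_cancel₀ _ (hm.pos x₁).ne']; ring
end

section
/- Let b be a connected, canonically compactifiable graph over a finite discrete measure space (X,m), and let h ∈ ℓ²(X,m) with h̄ < 0 and h(x₀) > 0 for some x₀ ∈ X. Then Q attains its infimum on the set B := {v ∈ D(Q) : ⟨h e^v, 1⟩ = 0 and ⟨v, 1⟩ = 0}: there exists w ∈ B with Q(w) ≤ Q(v) for all v ∈ B. -/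
open scoped BigOperators

namespace Stmt17Aux

variable {X : Type*}

/-- The raw (unhalved) energy sum terms. -/
def Eterm (b : X → X → ℝ) (u : X → ℝ) (p : X × X) : ℝ := b p.1 p.2 * (u p.1 - u p.2) ^ 2

def Nterm (m : X → ℝ) (u : X → ℝ) (x : X) : ℝ := u x ^ 2 * m x

lemma Eterm_nonneg {b : X → X → ℝ} (hb : IsGraph b) (u : X → ℝ) (p : X × X) :
    0 ≤ Eterm b u p := mul_nonneg (hb.nonneg _ _) (sq_nonneg _)

lemma Nterm_nonneg {m : X → ℝ} (hm : FinMeasure m) (u : X → ℝ) (x : X) :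
    0 ≤ Nterm m u x := mul_nonneg (sq_nonneg _) (hm.pos x).le

/-- The "unit ball" set used in the Baire argument. -/
def Kset (b : X → X → ℝ) (m : X → ℝ) : Set (X → ℝ) :=
  {u | ∀ (s : Finset (X × X)) (t : Finset X),
      ∑ p ∈ s, Eterm b u p + ∑ x ∈ t, Nterm m u x ≤ 1}

lemma mem_Kset_of {b : X → X → ℝ} {m : X → ℝ} (hb : IsGraph b) (hm : FinMeasure m)
    {u : X → ℝ} (hu : MemDQ b m u)
    (h1 : (∑' p, Eterm b u p) + ∑' x, Nterm m u x ≤ 1) : u ∈ Kset b m := by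
  intro s t
  have hE := Summable.sum_le_tsum s (fun p _ => Eterm_nonneg hb u p) hu.2
  have hN := Summable.sum_le_tsum t (fun x _ => Nterm_nonneg hm u x) hu.1
  linarith

lemma Kset_spec {b : X → X → ℝ} {m : X → ℝ} (hb : IsGraph b) (hm : FinMeasure m)
    {u : X → ℝ} (hu : u ∈ Kset b m) :
    MemDQ b m u ∧ (∑' p, Eterm b u p) + ∑' x, Nterm m u x ≤ 1 := by
  have hE : Summable (Eterm b u) := by
    apply summable_of_sum_le (Eterm_nonneg hb u)
    intro s
    have := hu s ∅
    simpa using this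
  have hN : Summable (Nterm m u) := by
    apply summable_of_sum_le (Nterm_nonneg hm u)
    intro t
    have := hu ∅ t
    simpa using this
  refine ⟨⟨hN, hE⟩, ?_⟩
  have h1 : ∀ t : Finset X, (∑' p, Eterm b u p) + ∑ x ∈ t, Nterm m u x ≤ 1 := by
    intro t
    have : (∑' p, Eterm b u p) ≤ 1 - ∑ x ∈ t, Nterm m u x := by
      apply Summable.tsum_le_of_sum_le hE
      intro s
      have := hu s t; linarith
    linarith
  have : (∑' x, Nterm m u x) ≤ 1 - ∑' p, Eterm b u p := by
    apply Summable.tsum_le_of_sum_le hN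
    intro t
    have := h1 t; linarith
  linarith

lemma Kset_closed (b : X → X → ℝ) (m : X → ℝ) : IsClosed (Kset b m) := by
  have : Kset b m = ⋂ (s : Finset (X × X)) (t : Finset X),
      {u : X → ℝ | ∑ p ∈ s, Eterm b u p + ∑ x ∈ t, Nterm m u x ≤ 1} := by
    ext u; simp [Kset, Set.mem_iInter]
  rw [this]
  refine isClosed_iInter fun s => isClosed_iInter fun t => ?_
  apply isClosed_le _ continuous_const
  apply Continuous.add
  · refine continuous_finset_sum _ fun p _ => ?_
    exact (continuous_const.mul (((continuous_apply p.1).sub (continuous_apply p.2)).pow 2))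
  · refine continuous_finset_sum _ fun x _ => ?_
    exact ((continuous_apply x).pow 2).mul continuous_const

lemma Kset_abs_le {b : X → X → ℝ} {m : X → ℝ} (hb : IsGraph b) (hm : FinMeasure m)
    {u : X → ℝ} (hu : u ∈ Kset b m) (x : X) : |u x| ≤ Real.sqrt (1 / m x) := by
  have h := hu ∅ {x}
  simp [Nterm] at h
  have hx : u x ^ 2 ≤ 1 / m x := by
    rw [le_div_iff₀ (hm.pos x)]; linarith
  calc |u x| = Real.sqrt (u x ^ 2) := by rw [Real.sqrt_sq_eq_abs]
    _ ≤ Real.sqrt (1 / m x) := Real.sqrt_le_sqrt hx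

lemma Kset_compact {b : X → X → ℝ} {m : X → ℝ} (hb : IsGraph b) (hm : FinMeasure m) :
    IsCompact (Kset b m) := by
  apply IsCompact.of_isClosed_subset (s := Set.pi Set.univ
    (fun x => Set.Icc (-Real.sqrt (1 / m x)) (Real.sqrt (1 / m x))))
    (isCompact_univ_pi fun x => isCompact_Icc) (Kset_closed b m)
  intro u hu x _
  have := Kset_abs_le hb hm hu x
  exact abs_le.mp this

lemma Kset_convex {b : X → X → ℝ} {m : X → ℝ} (hb : IsGraph b) (hm : FinMeasure m)
    {u v : X → ℝ} (hu : u ∈ Kset b m) (hv : v ∈ Kset b m) {δ : ℝ} (h0 : 0 ≤ δ) (h1 : δ ≤ 1) :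
    (fun x => (1 - δ) * u x + δ * v x) ∈ Kset b m := by
  intro s t
  have key1 : ∀ p : X × X, Eterm b (fun x => (1 - δ) * u x + δ * v x) p ≤
      (1 - δ) * Eterm b u p + δ * Eterm b v p := by
    intro p
    have hbp := hb.nonneg p.1 p.2
    have : ((1 - δ) * u p.1 + δ * v p.1 - ((1 - δ) * u p.2 + δ * v p.2)) ^ 2 ≤
        (1 - δ) * (u p.1 - u p.2) ^ 2 + δ * (v p.1 - v p.2) ^ 2 := by
      nlinarith [mul_nonneg (mul_nonneg h0 (by linarith : (0:ℝ) ≤ 1 - δ))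
        (sq_nonneg ((u p.1 - u p.2) - (v p.1 - v p.2)))]
    calc Eterm b (fun x => (1 - δ) * u x + δ * v x) p
        = b p.1 p.2 * ((1 - δ) * u p.1 + δ * v p.1 - ((1 - δ) * u p.2 + δ * v p.2)) ^ 2 := rfl
      _ ≤ b p.1 p.2 * ((1 - δ) * (u p.1 - u p.2) ^ 2 + δ * (v p.1 - v p.2) ^ 2) := by
          exact mul_le_mul_of_nonneg_left this hbp
      _ = (1 - δ) * Eterm b u p + δ * Eterm b v p := by unfold Eterm; ring
  have key2 : ∀ x : X, Nterm m (fun x => (1 - δ) * u x + δ * v x) x ≤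
      (1 - δ) * Nterm m u x + δ * Nterm m v x := by
    intro x
    have hmx := (hm.pos x).le
    have : ((1 - δ) * u x + δ * v x) ^ 2 ≤ (1 - δ) * u x ^ 2 + δ * v x ^ 2 := by
      nlinarith [mul_nonneg (mul_nonneg h0 (by linarith : (0:ℝ) ≤ 1 - δ))
        (sq_nonneg (u x - v x))]
    calc Nterm m (fun x => (1 - δ) * u x + δ * v x) x
        = ((1 - δ) * u x + δ * v x) ^ 2 * m x := rfl
      _ ≤ ((1 - δ) * u x ^ 2 + δ * v x ^ 2) * m x := mul_le_mul_of_nonneg_right this hmx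
      _ = (1 - δ) * Nterm m u x + δ * Nterm m v x := by unfold Nterm; ring
  calc ∑ p ∈ s, Eterm b (fun x => (1 - δ) * u x + δ * v x) p
        + ∑ x ∈ t, Nterm m (fun x => (1 - δ) * u x + δ * v x) x
      ≤ ∑ p ∈ s, ((1 - δ) * Eterm b u p + δ * Eterm b v p)
        + ∑ x ∈ t, ((1 - δ) * Nterm m u x + δ * Nterm m v x) := by
        gcongr with p hp x hx
        exacts [key1 p, key2 x]
    _ = (1 - δ) * (∑ p ∈ s, Eterm b u p + ∑ x ∈ t, Nterm m u x)
        + δ * (∑ p ∈ s, Eterm b v p + ∑ x ∈ t, Nterm m v x) := by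
        rw [Finset.sum_add_distrib, Finset.sum_add_distrib]
        simp only [← Finset.mul_sum]; ring
    _ ≤ (1 - δ) * 1 + δ * 1 := by
        have h1' : (0:ℝ) ≤ 1 - δ := by linarith
        gcongr
        exacts [hu s t, hv s t]
    _ = 1 := by ring



lemma unif_bound {b : X → X → ℝ} {m : X → ℝ} (hb : IsGraph b) (hm : FinMeasure m)
    (hcc : CanCompact b m) :
    ∃ c : ℝ, 0 < c ∧ ∀ u ∈ Kset b m, ∀ x, |u x| ≤ c := by
  classical
  set K := Kset b m with hK
  have hKc : IsCompact K := Kset_compact hb hm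
  have : CompactSpace K := isCompact_iff_compactSpace.mp hKc
  have hne : Nonempty K := ⟨⟨0, by intro s t; simp [Eterm, Nterm]⟩⟩
  -- Baire category on the compact set K
  set G : ℕ → Set K := fun n => {u | ∀ x, |u.1 x| ≤ n} with hG
  have hGclosed : ∀ n, IsClosed (G n) := by
    intro n
    have : G n = ⋂ x, {u : K | |u.1 x| ≤ n} := by ext u; simp [hG]
    rw [this]
    refine isClosed_iInter fun x => isClosed_le ?_ continuous_const
    exact ((continuous_apply x).comp continuous_subtype_val).abs
  have hGunion : ⋃ n, G n = Set.univ := by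
    ext u
    simp only [Set.mem_iUnion, Set.mem_univ, iff_true]
    obtain ⟨M, hM⟩ := hcc u.1 (Kset_spec hb hm u.2).1
    obtain ⟨n, hn⟩ := exists_nat_ge M
    exact ⟨n, fun x => (hM x).trans hn⟩
  obtain ⟨n, u₀, hu₀⟩ := nonempty_interior_of_iUnion_of_closed hGclosed hGunion
  have hu₀G : u₀ ∈ G n := interior_subset hu₀
  -- extract a basic product neighborhood
  have hnhds : G n ∈ nhds u₀ := mem_interior_iff_mem_nhds.mp hu₀
  obtain ⟨S, hS, hSsub⟩ := (mem_nhds_subtype K u₀ (G n)).mp hnhds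
  rw [nhds_pi] at hS
  obtain ⟨I, hIfin, t, ht, hIt⟩ := Filter.mem_pi.mp hS
  -- pick radii for each coordinate
  have hball : ∀ i, ∃ ε : ℝ, 0 < ε ∧ Metric.ball (u₀.1 i) ε ⊆ t i := by
    intro i
    obtain ⟨ε, hε, hsub⟩ := Metric.mem_nhds_iff.mp (ht i)
    exact ⟨ε, hε, hsub⟩
  choose εf hεf hεsub using hball
  set F : Finset X := hIfin.toFinset with hF
  set ε : ℝ := if h : F.Nonempty then min 1 (F.inf' h εf) else 1 with hε
  have hεpos : 0 < ε := by
    rw [hε]; split_ifs with h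
    · refine lt_min one_pos ?_
      rw [Finset.lt_inf'_iff]
      exact fun i _ => hεf i
    · exact one_pos
  have hεle : ∀ i ∈ F, ε ≤ εf i := by
    intro i hi
    rw [hε]
    have hne' : F.Nonempty := ⟨i, hi⟩
    simp only [dif_pos hne']
    exact le_trans (min_le_right _ _) (Finset.inf'_le εf hi)
  -- choose δ
  set R : ℝ := 1 + ∑ x ∈ F, Real.sqrt (1 / m x) with hR
  have hRpos : 0 < R := by
    rw [hR]
    have : (0:ℝ) ≤ ∑ x ∈ F, Real.sqrt (1 / m x) :=
      Finset.sum_nonneg fun x _ => Real.sqrt_nonneg _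
    linarith
  have hrR : ∀ x ∈ F, Real.sqrt (1 / m x) ≤ R := by
    intro x hx
    have h := Finset.single_le_sum (f := fun y => Real.sqrt (1 / m y))
      (fun y _ => Real.sqrt_nonneg _) hx
    rw [hR]
    linarith
  set δ : ℝ := min (1/2) (ε / (4 * R)) with hδ
  have hδpos : 0 < δ := lt_min (by norm_num) (div_pos hεpos (by linarith))
  have hδ1 : δ ≤ 1 := le_trans (min_le_left _ _) (by norm_num)
  refine ⟨2 * n / δ + 1, by positivity, ?_⟩
  intro v hv x
  -- the perturbed function
  set u' : X → ℝ := fun x => (1 - δ) * u₀.1 x + δ * v x with hu'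
  have hu'K : u' ∈ K := Kset_convex hb hm u₀.2 hv hδpos.le hδ1
  have hclose : ∀ i ∈ I, |u' i - u₀.1 i| < ε := by
    intro i hi
    have hiF : i ∈ F := hIfin.mem_toFinset.mpr hi
    have h1 : |u' i - u₀.1 i| = δ * |v i - u₀.1 i| := by
      rw [hu']
      have : (1 - δ) * u₀.1 i + δ * v i - u₀.1 i = δ * (v i - u₀.1 i) := by ring
      rw [this, abs_mul, abs_of_pos hδpos]
    have h2 : |v i - u₀.1 i| ≤ 2 * R := by
      have hva := Kset_abs_le hb hm hv i
      have hua := Kset_abs_le hb hm u₀.2 i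
      have := hrR i hiF
      have ha := hva.trans this
      have hb' := hua.trans this
      calc |v i - u₀.1 i| ≤ |v i| + |u₀.1 i| := abs_sub _ _
        _ ≤ 2 * R := by linarith
    have h3 : δ * |v i - u₀.1 i| ≤ (ε / (4 * R)) * (2 * R) := by
      apply mul_le_mul (min_le_right _ _) h2 (abs_nonneg _)
      positivity
    have h4 : (ε / (4 * R)) * (2 * R) = ε / 2 := by field_simp; ring
    rw [h1]
    calc δ * |v i - u₀.1 i| ≤ ε / 2 := by rw [← h4]; exact h3
      _ < ε := by linarith
  have hu'S : u' ∈ S := by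
    apply hIt
    intro i hi
    apply hεsub i
    rw [Metric.mem_ball, Real.dist_eq]
    exact lt_of_lt_of_le (hclose i hi) (hεle i (hIfin.mem_toFinset.mpr hi))
  have hu'G : (⟨u', hu'K⟩ : K) ∈ G n := hSsub hu'S
  have h5 : |u' x| ≤ n := hu'G x
  have h6 : |u₀.1 x| ≤ n := hu₀G x
  have h7 : δ * v x = u' x - (1 - δ) * u₀.1 x := by rw [hu']; ring
  have h8 : |δ * v x| ≤ 2 * n := by
    rw [h7]
    calc |u' x - (1 - δ) * u₀.1 x| ≤ |u' x| + |(1 - δ) * u₀.1 x| := abs_sub _ _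
      _ ≤ n + |1 - δ| * |u₀.1 x| := by rw [abs_mul]; linarith [abs_mul (1-δ) (u₀.1 x)]
      _ ≤ n + 1 * n := by
          have : |1 - δ| ≤ 1 := by rw [abs_le]; constructor <;> linarith
          have := mul_le_mul this h6 (abs_nonneg _) one_pos.le
          linarith
      _ = 2 * n := by ring
  have h9 : |v x| ≤ 2 * n / δ := by
    rw [abs_mul, abs_of_pos hδpos] at h8
    rw [div_eq_inv_mul, ← inv_mul_cancel_left₀ hδpos.ne' |v x|]
    apply mul_le_mul_of_nonneg_left h8 (by positivity)
  linarith

lemma Esum_nonneg {b : X → X → ℝ} (hb : IsGraph b) (u : X → ℝ) :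
    0 ≤ ∑' p, Eterm b u p := tsum_nonneg (Eterm_nonneg hb u)

lemma Nsum_nonneg {m : X → ℝ} (hm : FinMeasure m) (u : X → ℝ) :
    0 ≤ ∑' x, Nterm m u x := tsum_nonneg (Nterm_nonneg hm u)

lemma claimA {b : X → X → ℝ} {m : X → ℝ} (hb : IsGraph b) (hm : FinMeasure m)
    (hcc : CanCompact b m) :
    ∃ C : ℝ, 0 < C ∧ ∀ u : X → ℝ, MemDQ b m u → ∀ x,
      u x ^ 2 ≤ C * ((∑' p, Eterm b u p) + ∑' x, Nterm m u x) := by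
  obtain ⟨c, hc, hcb⟩ := unif_bound hb hm hcc
  refine ⟨c ^ 2 + 1, by positivity, ?_⟩
  intro u hu x
  set r : ℝ := (∑' p, Eterm b u p) + ∑' x, Nterm m u x with hr
  have hE0 := Esum_nonneg hb u
  have hN0 := Nsum_nonneg hm u
  have hr0 : 0 ≤ r := by rw [hr]; linarith
  rcases eq_or_lt_of_le hr0 with h0 | hpos
  · -- r = 0
    have hNsum0 : (∑' x, Nterm m u x) = 0 := by rw [hr] at h0; linarith
    have hterm : Nterm m u x ≤ 0 := by
      rw [← hNsum0]
      exact Summable.le_tsum hu.1 x (fun j _ => Nterm_nonneg hm u j)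
    have : u x ^ 2 ≤ 0 := by
      have := hm.pos x
      unfold Nterm at hterm
      nlinarith
    calc u x ^ 2 ≤ 0 := this
      _ ≤ (c ^ 2 + 1) * r := by rw [← h0]; norm_num
  · -- r > 0
    obtain ⟨sq, hspos, hs2⟩ : ∃ sq : ℝ, 0 < sq ∧ sq ^ 2 = r :=
      ⟨Real.sqrt r, Real.sqrt_pos.mpr hpos, Real.sq_sqrt hr0⟩
    set w : X → ℝ := fun y => u y / sq with hw
    have hwx2 : ∀ y, w y ^ 2 = u y ^ 2 / r := by
      intro y
      show (u y / sq) ^ 2 = u y ^ 2 / r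
      rw [div_pow, hs2]
    have hwK : w ∈ Kset b m := by
      intro sf tf
      have hEw : ∀ p : X × X, Eterm b w p = Eterm b u p / r := by
        intro p
        show b p.1 p.2 * (u p.1 / sq - u p.2 / sq) ^ 2 = b p.1 p.2 * (u p.1 - u p.2) ^ 2 / r
        rw [div_sub_div_same, div_pow, hs2, mul_div_assoc]
      have hNw : ∀ y, Nterm m w y = Nterm m u y / r := by
        intro y
        show (u y / sq) ^ 2 * m y = u y ^ 2 * m y / r
        rw [div_pow, hs2]; ring
      have h1 : ∑ p ∈ sf, Eterm b w p = (∑ p ∈ sf, Eterm b u p) / r := by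
        rw [Finset.sum_div]; exact Finset.sum_congr rfl fun p _ => hEw p
      have h2 : ∑ y ∈ tf, Nterm m w y = (∑ y ∈ tf, Nterm m u y) / r := by
        rw [Finset.sum_div]; exact Finset.sum_congr rfl fun y _ => hNw y
      rw [h1, h2, ← add_div, div_le_one hpos, hr]
      have hE := Summable.sum_le_tsum sf (fun p _ => Eterm_nonneg hb u p) hu.2
      have hN := Summable.sum_le_tsum tf (fun y _ => Nterm_nonneg hm u y) hu.1
      linarith
    have habs : |w x| ≤ c := hcb w hwK x
    have hsq : w x ^ 2 ≤ c ^ 2 := by nlinarith [sq_abs (w x), abs_nonneg (w x)]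
    rw [hwx2 x, div_le_iff₀ hpos] at hsq
    nlinarith

lemma summable_mul_m {m : X → ℝ} (hm : FinMeasure m) {u : X → ℝ} (hu : MemL2 m u) :
    Summable (fun x => u x * m x) := by
  have hbnd : ∀ x, ‖u x * m x‖ ≤ (u x ^ 2 * m x + m x) / 2 := by
    intro x
    have hmx := (hm.pos x).le
    rw [Real.norm_eq_abs, abs_mul, abs_of_nonneg hmx]
    nlinarith [sq_nonneg (|u x| - 1), sq_abs (u x)]
  exact Summable.of_norm (Summable.of_nonneg_of_le (fun x => norm_nonneg _) hbnd
    ((hu.add hm.summable).div_const 2))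

/-- Pointwise-bounded sequences have pointwise convergent subsequences. -/
lemma seq_compact_box [Countable X] {K : ℝ} (u : ℕ → X → ℝ)
    (hbd : ∀ n x, |u n x| ≤ K) :
    ∃ (w : X → ℝ) (φ : ℕ → ℕ), StrictMono φ ∧ (∀ x, |w x| ≤ K) ∧
      ∀ x, Filter.Tendsto (fun n => u (φ n) x) Filter.atTop (nhds (w x)) := by
  set C : Set (X → ℝ) := Set.pi Set.univ (fun _ => Set.Icc (-K) K) with hC
  have hCc : IsCompact C := isCompact_univ_pi fun x => isCompact_Icc
  have hmem : ∀ n, u n ∈ C := fun n x _ => abs_le.mp (hbd n x)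
  obtain ⟨w, hwC, φ, hφ, hconv⟩ := hCc.isSeqCompact hmem
  refine ⟨w, φ, hφ, fun x => abs_le.mpr (hwC x (Set.mem_univ x)), ?_⟩
  exact fun x => (tendsto_pi_nhds.mp hconv) x

lemma const_of_Eterm_zero {b : X → X → ℝ} (hconn : GraphConnected b) {u : X → ℝ}
    (h : ∀ p : X × X, Eterm b u p = 0) (x y : X) : u x = u y := by
  have key : ∀ a c : X, 0 < b a c → u a = u c := by
    intro a c hac
    have := h (a, c)
    unfold Eterm at this
    simp only at this
    have : (u a - u c) ^ 2 = 0 := by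
      rcases mul_eq_zero.mp this with h' | h'
      · exact absurd h' (ne_of_gt hac)
      · exact h'
    have := sq_eq_zero_iff.mp this
    linarith
  induction hconn x y with
  | refl => rfl
  | tail _ hrel ih => exact ih.trans (key _ _ hrel)

lemma claimB [Countable X] {b : X → X → ℝ} {m : X → ℝ} (hb : IsGraph b)
    (hconn : GraphConnected b) (hm : FinMeasure m) (hcc : CanCompact b m) :
    ∃ C : ℝ, 0 < C ∧ ∀ u : X → ℝ, MemDQ b m u → (∑' x, u x * m x) = 0 →
      (∑' x, Nterm m u x) ≤ C * ∑' p, Eterm b u p := by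
  by_contra hcon
  push_neg at hcon
  -- for each n, a counterexample
  have hseq : ∀ n : ℕ, ∃ v : X → ℝ, MemDQ b m v ∧ (∑' x, v x * m x) = 0 ∧
      (∑' x, Nterm m v x) = 1 ∧ (∑' p, Eterm b v p) ≤ 1 / (n + 1) := by
    intro n
    obtain ⟨u, hu, hmean, hgt⟩ := hcon ((n : ℝ) + 1) (by positivity)
    have hE0 := Esum_nonneg hb u
    have hN0 := Nsum_nonneg hm u
    have hNpos : 0 < ∑' x, Nterm m u x := lt_of_le_of_lt (by positivity) hgt
    obtain ⟨sq, hsqpos, hsq2⟩ : ∃ sq : ℝ, 0 < sq ∧ sq ^ 2 = (∑' x, Nterm m u x)⁻¹ :=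
      ⟨Real.sqrt (∑' x, Nterm m u x)⁻¹, Real.sqrt_pos.mpr (by positivity),
        Real.sq_sqrt (by positivity)⟩
    refine ⟨fun x => sq * u x, ⟨?_, ?_⟩, ?_, ?_, ?_⟩
    · -- MemL2
      have : (fun x => (sq * u x) ^ 2 * m x) = fun x => sq ^ 2 * (u x ^ 2 * m x) := by
        funext x; ring
      rw [MemL2, this]
      exact hu.1.mul_left _
    · -- FinEnergy
      have : (fun p : X × X => b p.1 p.2 * (sq * u p.1 - sq * u p.2) ^ 2) =
          fun p : X × X => sq ^ 2 * (b p.1 p.2 * (u p.1 - u p.2) ^ 2) := by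
        funext p; ring
      rw [FinEnergy, this]
      exact hu.2.mul_left _
    · -- mean zero
      have : (fun x => (sq * u x) * m x) = fun x => sq * (u x * m x) := by funext x; ring
      rw [this, Summable.tsum_mul_left sq (summable_mul_m hm hu.1), hmean, mul_zero]
    · -- Nsum = 1
      have : (fun x => Nterm m (fun y => sq * u y) x) = fun x => sq ^ 2 * Nterm m u x := by
        funext x; unfold Nterm; ring
      rw [this, Summable.tsum_mul_left _ (show Summable (fun x => Nterm m u x) from hu.1),
        hsq2, inv_mul_cancel₀ (ne_of_gt hNpos)]
    · -- Esum small
      have heq : (fun p => Eterm b (fun y => sq * u y) p) = fun p => sq ^ 2 * Eterm b u p := by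
        funext p; unfold Eterm; ring
      rw [heq, Summable.tsum_mul_left _ (show Summable (fun p => Eterm b u p) from hu.2), hsq2]
      rw [inv_mul_le_iff₀ hNpos, mul_one_div, le_div_iff₀ (by positivity)]
      linarith

  choose v hvDQ hvmean hvN hvE using hseq
  -- uniform bound
  obtain ⟨CA, hCA, hCAb⟩ := claimA hb hm hcc
  set K : ℝ := Real.sqrt (CA * 2) with hK
  have hvbd : ∀ n x, |v n x| ≤ K := by
    intro n x
    have h1 := hCAb (v n) (hvDQ n) x
    have h2 : (∑' p, Eterm b (v n) p) + (∑' x, Nterm m (v n) x) ≤ 2 := by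
      rw [hvN n]
      have : (1:ℝ) / (n + 1) ≤ 1 := by
        rw [div_le_one (by positivity)]; push_cast; linarith [Nat.cast_nonneg (α := ℝ) n]
      linarith [hvE n]
    have h3 : v n x ^ 2 ≤ CA * 2 := le_trans h1 (by nlinarith)
    calc |v n x| = Real.sqrt (v n x ^ 2) := (Real.sqrt_sq_eq_abs _).symm
      _ ≤ K := Real.sqrt_le_sqrt h3
  obtain ⟨w, φ, hφ, hwbd, hconv⟩ := seq_compact_box v hvbd
  -- limit is constant
  have hwconst : ∀ x y, w x = w y := by
    apply const_of_Eterm_zero hconn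
    intro p
    have hle : ∀ n, Eterm b (v (φ n)) p ≤ 1 / ((n:ℝ) + 1) := by
      intro n
      have h1 : Eterm b (v (φ n)) p ≤ ∑' q, Eterm b (v (φ n)) q :=
        Summable.le_tsum (hvDQ (φ n)).2 p (fun j _ => Eterm_nonneg hb _ j)
      have h2 := hvE (φ n)
      have h3 : (1:ℝ) / ((φ n : ℝ) + 1) ≤ 1 / ((n:ℝ) + 1) := by
        apply div_le_div_of_nonneg_left one_pos.le (by positivity)
        have := hφ.le_apply (x := n)
        push_cast
        exact_mod_cast by exact_mod_cast add_le_add_left (Nat.cast_le.mpr this) 1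
      linarith
    have htend : Filter.Tendsto (fun n => Eterm b (v (φ n)) p) Filter.atTop
        (nhds (Eterm b w p)) := by
      unfold Eterm
      exact (((hconv p.1).sub (hconv p.2)).pow 2).const_mul _
    have hle0 : Eterm b w p ≤ 0 :=
      le_of_tendsto_of_tendsto' htend tendsto_one_div_add_atTop_nhds_zero_nat hle
    exact le_antisymm hle0 (Eterm_nonneg hb w p)
  -- dominated convergence for the mean and the norm
  have hmean0 : (∑' x, w x * m x) = 0 := by
    have h1 : Filter.Tendsto (fun n => ∑' x, v (φ n) x * m x) Filter.atTop
        (nhds (∑' x, w x * m x)) := by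
      apply tendsto_tsum_of_dominated_convergence (bound := fun x => K * m x)
        (hm.summable.mul_left K)
      · exact fun x => (hconv x).mul_const _
      · filter_upwards with n x
        rw [Real.norm_eq_abs, abs_mul, abs_of_nonneg (hm.pos x).le]
        exact mul_le_mul_of_nonneg_right (hvbd (φ n) x) (hm.pos x).le
    have h2 : Filter.Tendsto (fun n => ∑' x, v (φ n) x * m x) Filter.atTop (nhds 0) := by
      simp only [hvmean]; exact tendsto_const_nhds
    exact tendsto_nhds_unique h1 h2
  have hN1 : (∑' x, Nterm m w x) = 1 := by
    have h1 : Filter.Tendsto (fun n => ∑' x, Nterm m (v (φ n)) x) Filter.atTop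
        (nhds (∑' x, Nterm m w x)) := by
      apply tendsto_tsum_of_dominated_convergence (bound := fun x => K ^ 2 * m x)
        (hm.summable.mul_left _)
      · intro x
        unfold Nterm
        exact ((hconv x).pow 2).mul_const _
      · filter_upwards with n x
        have h := hvbd (φ n) x
        have hKnn : 0 ≤ K := Real.sqrt_nonneg _
        have h2 : v (φ n) x ^ 2 ≤ K ^ 2 := by
          nlinarith [sq_abs (v (φ n) x), abs_nonneg (v (φ n) x)]
        unfold Nterm
        rw [Real.norm_eq_abs, abs_of_nonneg (mul_nonneg (sq_nonneg _) (hm.pos x).le)]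
        exact mul_le_mul_of_nonneg_right h2 (hm.pos x).le
    have h2 : Filter.Tendsto (fun n => ∑' x, Nterm m (v (φ n)) x) Filter.atTop (nhds 1) := by
      simp only [hvN]; exact tendsto_const_nhds
    exact tendsto_nhds_unique h1 h2
  -- derive contradiction
  have hXne : Nonempty X := by
    by_contra hX
    rw [not_nonempty_iff] at hX
    rw [tsum_empty] at hN1
    norm_num at hN1
  obtain ⟨x₀⟩ := hXne
  have hMpos : 0 < ∑' x, m x := Summable.tsum_pos hm.summable (fun x => (hm.pos x).le) x₀ (hm.pos x₀)
  have hw0 : w x₀ = 0 := by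
    have : (∑' x, w x * m x) = w x₀ * ∑' x, m x := by
      rw [← Summable.tsum_mul_left _ hm.summable]
      exact tsum_congr fun x => by rw [hwconst x x₀]
    rw [hmean0] at this
    have := this.symm
    rcases mul_eq_zero.mp this with h | h
    · exact h
    · exact absurd h (ne_of_gt hMpos)
  have : (∑' x, Nterm m w x) = 0 := by
    have : ∀ x, Nterm m w x = 0 := by
      intro x
      unfold Nterm
      rw [hwconst x x₀, hw0]
      ring
    rw [tsum_congr this, tsum_zero]
  rw [this] at hN1
  norm_num at hN1

lemma summable_abs_mul_m {m : X → ℝ} (hm : FinMeasure m) {u : X → ℝ} (hu : MemL2 m u) :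
    Summable (fun x => |u x| * m x) := by
  have : MemL2 m (fun x => |u x|) := by
    unfold MemL2 at hu ⊢
    simpa [sq_abs] using hu
  exact summable_mul_m hm this

lemma B_nonempty [Countable X] {b : X → X → ℝ} {m : X → ℝ} (hb : IsGraph b)
    (hm : FinMeasure m) {h : X → ℝ} (hh2 : MemL2 m h)
    (hmean : mean m h < 0) (hpos : ∃ x₀, 0 < h x₀) :
    ∃ v : X → ℝ, MemDQ b m v ∧ (∑' x, h x * Real.exp (v x) * m x) = 0 ∧
      (∑' x, v x * m x) = 0 := by
  classical
  obtain ⟨x₀, hx₀⟩ := hpos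
  have hXne : Nonempty X := ⟨x₀⟩
  set M : ℝ := ∑' x, m x with hM
  have hMpos : 0 < M := Summable.tsum_pos hm.summable (fun x => (hm.pos x).le) x₀ (hm.pos x₀)
  have hhm : Summable (fun x => h x * m x) := summable_mul_m hm hh2
  have hhabs : Summable (fun x => |h x| * m x) := summable_abs_mul_m hm hh2
  have hsumhm : (∑' x, h x * m x) < 0 := by
    have h0 : (∑' x, h x * m x) / M < 0 := hmean
    rcases div_neg_iff.mp h0 with ⟨_, hM0⟩ | ⟨hT, _⟩
    · linarith
    · exact hT
  clear_value M
  -- there is a second point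
  have hx₁ : ∃ x₁, x₁ ≠ x₀ := by
    by_contra hco
    push_neg at hco
    have : (∑' x, h x * m x) = h x₀ * m x₀ :=
      tsum_eq_single x₀ (fun y hy => absurd (hco y) hy)
    rw [this] at hsumhm
    nlinarith [hm.pos x₀]
  obtain ⟨x₁, hx₁⟩ := hx₁
  set c : ℝ := m x₀ / M with hc
  have hcpos : 0 < c := div_pos (hm.pos x₀) hMpos
  have hmlt : m x₀ < M := by
    have hle : m x₀ + m x₁ ≤ ∑' x, m x := by
      have := Summable.sum_le_tsum ({x₀, x₁} : Finset X) (fun x _ => (hm.pos x).le) hm.summable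
      rwa [Finset.sum_pair (fun he => hx₁ he.symm)] at this
    rw [hM]
    linarith [hm.pos x₁]
  have hc1 : c < 1 := (div_lt_one hMpos).mpr hmlt
  clear_value c
  set a : ℝ := 1 - c with ha
  have hapos : 0 < a := by rw [ha]; linarith
  clear_value a
  -- the family of test functions
  set χ : X → ℝ := fun x => if x = x₀ then 1 else 0 with hχ
  set vt : ℝ → X → ℝ := fun t x => t * (χ x - c) with hvt
  clear_value χ vt
  have hχval : ∀ x, χ x = 1 ∨ χ x = 0 := by
    intro x; simp only [hχ]; split_ifs <;> simp
  have hvbd : ∀ t x, |vt t x| ≤ |t| * (1 + c) := by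
    intro t x
    have habs : |χ x - c| ≤ 1 + c := by
      rcases hχval x with h' | h' <;> rw [h', abs_le] <;> constructor <;> linarith
    calc |vt t x| = |t| * |χ x - c| := by simp only [hvt]; rw [abs_mul]
      _ ≤ |t| * (1 + c) := mul_le_mul_of_nonneg_left habs (abs_nonneg t)
  have hDQ : ∀ t, MemDQ b m (vt t) := by
    intro t
    constructor
    · -- MemL2
      unfold MemL2
      apply Summable.of_nonneg_of_le
        (fun x => mul_nonneg (sq_nonneg _) (hm.pos x).le)
        (f := fun x => (|t| * (1 + c)) ^ 2 * m x)
      · intro x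
        apply mul_le_mul_of_nonneg_right _ (hm.pos x).le
        have := hvbd t x
        nlinarith [abs_nonneg (vt t x), sq_abs (vt t x)]
      · exact hm.summable.mul_left _
    · -- FinEnergy
      unfold FinEnergy
      set g1 : X × X → ℝ := fun p => if p.1 = x₀ then b p.1 p.2 else 0 with hg1
      set g2 : X × X → ℝ := fun p => if p.2 = x₀ then b p.1 p.2 else 0 with hg2
      have hg1nn : ∀ p, 0 ≤ g1 p := by
        intro p; simp only [hg1]; split_ifs; exacts [hb.nonneg _ _, le_refl 0]
      have hg2nn : ∀ p, 0 ≤ g2 p := by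
        intro p; simp only [hg2]; split_ifs; exacts [hb.nonneg _ _, le_refl 0]
      have hg1s : Summable g1 := by
        rw [summable_prod_of_nonneg (fun p => hg1nn p)]
        constructor
        · intro x
          by_cases hx : x = x₀
          · simpa [hg1, hx] using hb.row_summable x₀
          · simpa [hg1, hx] using summable_zero
        · apply summable_of_ne_finset_zero (s := {x₀})
          intro x hx
          simp only [Finset.mem_singleton] at hx
          simp [hg1, hx]
      have hg2s : Summable g2 := by
        rw [summable_prod_of_nonneg (fun p => hg2nn p)]
        constructor
        · intro x
          apply Summable.of_nonneg_of_le (fun y => hg2nn (x, y))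
            (f := fun y => b x y) _ (hb.row_summable x)
          intro y
          simp only [hg2]
          split_ifs
          · exact le_refl _
          · exact hb.nonneg _ _
        · apply Summable.of_nonneg_of_le
            (fun x => tsum_nonneg (fun y => hg2nn (x, y)))
            (f := fun x => b x x₀)
          · intro x
            have heval : (∑' y, g2 (x, y)) = b x x₀ := by
              rw [tsum_eq_single x₀ (fun y hy => by simp [hg2, hy])]
              simp [hg2]
            rw [heval]
          · exact (hb.row_summable x₀).congr (fun y => hb.symm x₀ y)
      apply Summable.of_nonneg_of_le
        (fun p => mul_nonneg (hb.nonneg _ _) (sq_nonneg _))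
        (f := fun p => t ^ 2 * (g1 p + g2 p))
      · intro p
        have hΔ : vt t p.1 - vt t p.2 = t * (χ p.1 - χ p.2) := by
          simp only [hvt]; ring
        have hχ2 : (χ p.1 - χ p.2) ^ 2 ≤ 1 := by
          rcases hχval p.1 with e1 | e1 <;> rcases hχval p.2 with e2 | e2 <;>
            rw [e1, e2] <;> norm_num
        have key := mul_nonneg (mul_nonneg (hb.nonneg p.1 p.2) (sq_nonneg t))
          (sub_nonneg.mpr hχ2)
        by_cases h1 : p.1 = x₀
        · have hg : g1 p = b p.1 p.2 := by simp [hg1, h1]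
          rw [hΔ]
          nlinarith [mul_nonneg (sq_nonneg t) (hg2nn p)]
        · by_cases h2 : p.2 = x₀
          · have hg : g2 p = b p.1 p.2 := by simp [hg2, h2]
            rw [hΔ]
            nlinarith [mul_nonneg (sq_nonneg t) (hg1nn p)]
          · have e1 : χ p.1 = 0 := by simp [hχ, h1]
            have e2 : χ p.2 = 0 := by simp [hχ, h2]
            rw [hΔ, e1, e2]
            nlinarith [mul_nonneg (sq_nonneg t) (add_nonneg (hg1nn p) (hg2nn p))]
      · exact ((hg1s.add hg2s).mul_left _)
  -- mean of vt is zero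
  have hχms : Summable (fun x => χ x * m x) := by
    apply summable_of_ne_finset_zero (s := {x₀})
    intro x hx
    simp only [Finset.mem_singleton] at hx
    simp [hχ, hx]
  have hχm : (∑' x, χ x * m x) = m x₀ := by
    have heach : ∀ x, χ x * m x = if x = x₀ then m x₀ else 0 := by
      intro x; simp only [hχ]; split_ifs with hx <;> simp [hx]
    rw [tsum_congr heach, tsum_ite_eq]
  have hmeanv : ∀ t, (∑' x, vt t x * m x) = 0 := by
    intro t
    have heach : ∀ x, vt t x * m x = t * (χ x * m x) - (t * c) * m x := by
      intro x; simp only [hvt]; ring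
    rw [tsum_congr heach, Summable.tsum_sub ((hχms).mul_left t) (hm.summable.mul_left (t*c)),
      Summable.tsum_mul_left _ hχms, Summable.tsum_mul_left _ hm.summable, hχm, ← hM]
    rw [hc]
    field_simp
    ring
  -- the constraint function
  set S : ℝ := ∑' x, (if x = x₀ then 0 else h x * m x) with hS
  clear_value S
  have hSsum : Summable (fun x => if x = x₀ then 0 else h x * m x) := by
    apply Summable.of_norm
    apply Summable.of_nonneg_of_le (fun x => norm_nonneg _) (f := fun x => |h x| * m x)
      _ hhabs
    intro x
    rw [Real.norm_eq_abs]
    split_ifs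
    · simp [mul_nonneg (abs_nonneg _) (hm.pos x).le]
    · rw [abs_mul, abs_of_nonneg (hm.pos x).le]
  set f : ℝ → ℝ := fun t => h x₀ * Real.exp (t * a) * m x₀ + Real.exp (-(t * c)) * S with hf
  have hfsum : ∀ t, Summable (fun x => h x * Real.exp (vt t x) * m x) := by
    intro t
    apply Summable.of_norm
    apply Summable.of_nonneg_of_le (fun x => norm_nonneg _)
      (f := fun x => Real.exp (|t| * (1 + c)) * (|h x| * m x)) _ (hhabs.mul_left _)
    intro x
    rw [Real.norm_eq_abs, abs_mul, abs_mul, abs_of_nonneg (hm.pos x).le,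
      abs_of_nonneg (Real.exp_nonneg _)]
    have hee : Real.exp (vt t x) ≤ Real.exp (|t| * (1 + c)) :=
      Real.exp_le_exp.mpr (le_trans (le_abs_self _) (hvbd t x))
    calc |h x| * Real.exp (vt t x) * m x ≤ |h x| * Real.exp (|t| * (1 + c)) * m x := by
          apply mul_le_mul_of_nonneg_right _ (hm.pos x).le
          exact mul_le_mul_of_nonneg_left hee (abs_nonneg _)
      _ = Real.exp (|t| * (1 + c)) * (|h x| * m x) := by ring
  have hfeq : ∀ t, (∑' x, h x * Real.exp (vt t x) * m x) = f t := by
    intro t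
    rw [Summable.tsum_eq_add_tsum_ite (hfsum t) x₀]
    have h1 : vt t x₀ = t * a := by simp only [hvt, hχ, ha]; simp
    have h2 : ∀ x, (if x = x₀ then 0 else h x * Real.exp (vt t x) * m x) =
        Real.exp (-(t * c)) * (if x = x₀ then 0 else h x * m x) := by
      intro x
      split_ifs with hx
      · simp
      · have hvx : vt t x = -(t * c) := by simp only [hvt, hχ]; simp [hx]
        rw [hvx]; ring
    rw [tsum_congr h2, Summable.tsum_mul_left _ hSsum, h1, ← hS]
  have hf0 : f 0 < 0 := by
    have heq0 : f 0 = h x₀ * m x₀ + S := by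
      show h x₀ * Real.exp (0 * a) * m x₀ + Real.exp (-(0 * c)) * S = h x₀ * m x₀ + S
      norm_num
    have hsplit : (∑' x, h x * m x) = h x₀ * m x₀ + S := by
      rw [Summable.tsum_eq_add_tsum_ite hhm x₀, hS]
    rw [heq0, ← hsplit]
    exact hsumhm
  -- a point where f is positive
  have hfpos : ∃ t : ℝ, 0 ≤ t ∧ 0 < f t := by
    have hm0pos : 0 < h x₀ * m x₀ := mul_pos hx₀ (hm.pos x₀)
    set t₁ : ℝ := max 1 ((|S| + 1) / (a * (h x₀ * m x₀))) with ht₁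
    have ht₁pos : (0:ℝ) ≤ t₁ := le_trans zero_le_one (le_max_left _ _)
    refine ⟨t₁, ht₁pos, ?_⟩
    have h1 : (|S| + 1) / (a * (h x₀ * m x₀)) ≤ t₁ := le_max_right _ _
    have h2 : |S| + 1 ≤ t₁ * (a * (h x₀ * m x₀)) := by
      rw [div_le_iff₀ (by positivity)] at h1
      linarith
    clear_value t₁
    have h3 : t₁ * a ≤ Real.exp (t₁ * a) := by
      linarith [Real.add_one_le_exp (t₁ * a)]
    have h4 : |S| + 1 ≤ (h x₀ * m x₀) * Real.exp (t₁ * a) := by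
      have hmul := mul_le_mul_of_nonneg_right h3 hm0pos.le
      calc |S| + 1 ≤ t₁ * (a * (h x₀ * m x₀)) := h2
        _ = (t₁ * a) * (h x₀ * m x₀) := by ring
        _ ≤ Real.exp (t₁ * a) * (h x₀ * m x₀) := hmul
        _ = (h x₀ * m x₀) * Real.exp (t₁ * a) := by ring
    have h5 : -|S| ≤ Real.exp (-(t₁ * c)) * S := by
      have he1 : Real.exp (-(t₁ * c)) ≤ 1 := by
        rw [Real.exp_le_one_iff]
        nlinarith [mul_nonneg ht₁pos hcpos.le]
      have he0 : 0 < Real.exp (-(t₁ * c)) := Real.exp_pos _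
      rcases le_or_gt 0 S with hS0 | hS0
      · have hnn : 0 ≤ Real.exp (-(t₁ * c)) * S := mul_nonneg he0.le hS0
        linarith [abs_nonneg S]
      · have hmm := mul_le_mul_of_nonpos_right he1 hS0.le
        calc -|S| = S := by rw [abs_of_neg hS0]; ring
          _ = 1 * S := (one_mul S).symm
          _ ≤ Real.exp (-(t₁ * c)) * S := hmm
    show 0 < h x₀ * Real.exp (t₁ * a) * m x₀ + Real.exp (-(t₁ * c)) * S
    linarith [h4, h5]
  obtain ⟨t₁, ht₁0, ht₁⟩ := hfpos
  -- IVT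
  have hcont : Continuous f := by
    rw [hf]
    fun_prop
  have hmem0 : (0:ℝ) ∈ Set.Icc (f 0) (f t₁) := ⟨hf0.le, ht₁.le⟩
  obtain ⟨t, _, htf⟩ := intermediate_value_Icc ht₁0 hcont.continuousOn hmem0
  exact ⟨vt t, hDQ t, by rw [hfeq t, htf], hmeanv t⟩

lemma energy_eq (b : X → X → ℝ) (u : X → ℝ) :
    energy b u = (1 / 2) * ∑' p, Eterm b u p := rfl

lemma energy_nonneg {b : X → X → ℝ} (hb : IsGraph b) (u : X → ℝ) :
    0 ≤ energy b u := by
  rw [energy_eq]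
  have : 0 ≤ ∑' p, Eterm b u p := tsum_nonneg (Eterm_nonneg hb u)
  linarith

end Stmt17Aux

open Stmt17Aux in
/-- `Q` attains its infimum on
`B = {v ∈ D(Q) : ⟨h e^v, 1⟩ = 0, ⟨v, 1⟩ = 0}`. -/
theorem stmt17 {X : Type*} [Countable X] (b : X → X → ℝ) (m : X → ℝ)
    (hb : IsGraph b) (hconn : GraphConnected b) (hm : FinMeasure m)
    (hcc : CanCompact b m) (h : X → ℝ) (hh2 : MemL2 m h)
    (hmean : mean m h < 0) (hpos : ∃ x₀, 0 < h x₀) :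
    ∃ w : X → ℝ,
      (MemDQ b m w ∧ (∑' x, h x * Real.exp (w x) * m x) = 0 ∧
        (∑' x, w x * m x) = 0) ∧
      ∀ v : X → ℝ, MemDQ b m v → (∑' x, h x * Real.exp (v x) * m x) = 0 →
        (∑' x, v x * m x) = 0 → energy b w ≤ energy b v := by
  classical
  set Bset : Set (X → ℝ) := {v | MemDQ b m v ∧ (∑' x, h x * Real.exp (v x) * m x) = 0 ∧
    (∑' x, v x * m x) = 0} with hBset
  obtain ⟨v₀, hv₀⟩ := B_nonempty hb hm hh2 hmean hpos
  have hBne : Bset.Nonempty := ⟨v₀, hv₀⟩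
  set A : Set ℝ := energy b '' Bset with hA
  have hAne : A.Nonempty := hBne.image _
  have hbdd : BddBelow A := by
    refine ⟨0, ?_⟩
    rintro y ⟨u, _, rfl⟩
    exact energy_nonneg hb u
  set α : ℝ := sInf A with hα
  have hα0 : 0 ≤ α := le_csInf hAne (by rintro y ⟨u, _, rfl⟩; exact energy_nonneg hb u)
  -- minimizing sequence
  have hseq : ∀ n : ℕ, ∃ v, v ∈ Bset ∧ energy b v < α + 1 / ((n:ℝ) + 1) := by
    intro n
    have hlt : sInf A < α + 1 / ((n:ℝ) + 1) := by
      rw [← hα]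
      have : (0:ℝ) < 1 / ((n:ℝ) + 1) := by positivity
      linarith
    obtain ⟨y, hyA, hylt⟩ := exists_lt_of_csInf_lt hAne hlt
    obtain ⟨v, hvB, rfl⟩ := hyA
    exact ⟨v, hvB, hylt⟩
  choose v hvB hvE using hseq
  obtain ⟨CB, hCB, hCBp⟩ := claimB hb hconn hm hcc
  obtain ⟨CA, hCA, hCAp⟩ := claimA hb hm hcc
  -- uniform bounds along the sequence
  have hEb : ∀ n, (∑' p, Eterm b (v n) p) ≤ 2 * (α + 1) := by
    intro n
    have h1 := hvE n
    have h2 : (1:ℝ) / ((n:ℝ) + 1) ≤ 1 := by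
      rw [div_le_one (by positivity)]
      linarith [Nat.cast_nonneg (α := ℝ) n]
    have := energy_eq b (v n)
    linarith [this]
  have hNb : ∀ n, (∑' x, Nterm m (v n) x) ≤ CB * (2 * (α + 1)) := by
    intro n
    have h1 := hCBp (v n) (hvB n).1 (hvB n).2.2
    have h2 := hEb n
    nlinarith
  set K : ℝ := Real.sqrt (CA * (2 * (α + 1) + CB * (2 * (α + 1)))) with hK
  have hKb : ∀ n x, |v n x| ≤ K := by
    intro n x
    have h1 := hCAp (v n) (hvB n).1 x
    have h2 : v n x ^ 2 ≤ CA * (2 * (α + 1) + CB * (2 * (α + 1))) := by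
      have := hEb n
      have := hNb n
      nlinarith
    calc |v n x| = Real.sqrt (v n x ^ 2) := (Real.sqrt_sq_eq_abs _).symm
      _ ≤ K := Real.sqrt_le_sqrt h2
  obtain ⟨w, φ, hφ, hwbd, hconv⟩ := seq_compact_box v hKb
  have hKnn : 0 ≤ K := Real.sqrt_nonneg _
  have hφle : ∀ n : ℕ, (1:ℝ) / ((φ n : ℝ) + 1) ≤ 1 / ((n:ℝ) + 1) := by
    intro n
    apply div_le_div_of_nonneg_left one_pos.le (by positivity)
    exact_mod_cast add_le_add_left (Nat.cast_le.mpr (hφ.le_apply)) 1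
  -- energy of the limit
  have hpartial : ∀ s : Finset (X × X), (∑ p ∈ s, Eterm b w p) ≤ 2 * α := by
    intro s
    have hf : Filter.Tendsto (fun n => ∑ p ∈ s, Eterm b (v (φ n)) p) Filter.atTop
        (nhds (∑ p ∈ s, Eterm b w p)) := by
      apply tendsto_finset_sum
      intro p _
      unfold Eterm
      exact (((hconv p.1).sub (hconv p.2)).pow 2).const_mul _
    have hg : Filter.Tendsto (fun n : ℕ => 2 * (α + 1 / ((n:ℝ) + 1))) Filter.atTop
        (nhds (2 * α)) := by
      have := (tendsto_const_nhds (x := α) (f := Filter.atTop (α := ℕ))).add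
        tendsto_one_div_add_atTop_nhds_zero_nat
      have h2 := this.const_mul (2:ℝ)
      simpa using h2
    apply le_of_tendsto_of_tendsto' hf hg
    intro n
    have h1 : (∑ p ∈ s, Eterm b (v (φ n)) p) ≤ ∑' p, Eterm b (v (φ n)) p :=
      Summable.sum_le_tsum s (fun p _ => Eterm_nonneg hb _ p) (hvB (φ n)).1.2
    have h2 := hvE (φ n)
    have h3 := energy_eq b (v (φ n))
    have h4 := hφle n
    linarith
  have hwFE : FinEnergy b w := summable_of_sum_le (Eterm_nonneg hb w) hpartial
  have hwEle : energy b w ≤ α := by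
    rw [energy_eq]
    have hw2 : Summable (fun p => Eterm b w p) := hwFE
    have := Summable.tsum_le_of_sum_le hw2 hpartial
    linarith
  -- the limit is in ℓ²
  have hwL2 : MemL2 m w := by
    unfold MemL2
    apply Summable.of_nonneg_of_le (fun x => mul_nonneg (sq_nonneg _) (hm.pos x).le)
      (f := fun x => K ^ 2 * m x)
    · intro x
      apply mul_le_mul_of_nonneg_right _ (hm.pos x).le
      nlinarith [hwbd x, abs_nonneg (w x), sq_abs (w x)]
    · exact hm.summable.mul_left _
  -- constraints pass to the limit
  have hhabs : Summable (fun x => |h x| * m x) := summable_abs_mul_m hm hh2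
  have hwcon : (∑' x, h x * Real.exp (w x) * m x) = 0 := by
    have h1 : Filter.Tendsto (fun n => ∑' x, h x * Real.exp (v (φ n) x) * m x)
        Filter.atTop (nhds (∑' x, h x * Real.exp (w x) * m x)) := by
      apply tendsto_tsum_of_dominated_convergence
        (bound := fun x => Real.exp K * (|h x| * m x)) (hhabs.mul_left _)
      · intro x
        exact ((Real.continuous_exp.continuousAt.tendsto.comp (hconv x)).const_mul
          (h x)).mul_const (m x)
      · filter_upwards with n x
        rw [Real.norm_eq_abs, abs_mul, abs_mul, abs_of_nonneg (hm.pos x).le,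
          abs_of_nonneg (Real.exp_nonneg _)]
        have hee : Real.exp (v (φ n) x) ≤ Real.exp K :=
          Real.exp_le_exp.mpr (le_trans (le_abs_self _) (hKb (φ n) x))
        calc |h x| * Real.exp (v (φ n) x) * m x ≤ |h x| * Real.exp K * m x := by
              apply mul_le_mul_of_nonneg_right _ (hm.pos x).le
              exact mul_le_mul_of_nonneg_left hee (abs_nonneg _)
          _ = Real.exp K * (|h x| * m x) := by ring
    have h2 : Filter.Tendsto (fun n => ∑' x, h x * Real.exp (v (φ n) x) * m x)
        Filter.atTop (nhds 0) := by
      have : ∀ n, (∑' x, h x * Real.exp (v (φ n) x) * m x) = 0 := fun n => (hvB (φ n)).2.1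
      simp only [this]
      exact tendsto_const_nhds
    exact tendsto_nhds_unique h1 h2
  have hwmean : (∑' x, w x * m x) = 0 := by
    have h1 : Filter.Tendsto (fun n => ∑' x, v (φ n) x * m x)
        Filter.atTop (nhds (∑' x, w x * m x)) := by
      apply tendsto_tsum_of_dominated_convergence (bound := fun x => K * m x)
        (hm.summable.mul_left _)
      · exact fun x => (hconv x).mul_const _
      · filter_upwards with n x
        rw [Real.norm_eq_abs, abs_mul, abs_of_nonneg (hm.pos x).le]
        exact mul_le_mul_of_nonneg_right (hKb (φ n) x) (hm.pos x).le
    have h2 : Filter.Tendsto (fun n => ∑' x, v (φ n) x * m x) Filter.atTop (nhds 0) := by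
      have : ∀ n, (∑' x, v (φ n) x * m x) = 0 := fun n => (hvB (φ n)).2.2
      simp only [this]
      exact tendsto_const_nhds
    exact tendsto_nhds_unique h1 h2
  refine ⟨w, ⟨⟨hwL2, hwFE⟩, hwcon, hwmean⟩, ?_⟩
  intro u hu h1 h2
  have huA : energy b u ∈ A := ⟨u, ⟨hu, h1, h2⟩, rfl⟩
  have := csInf_le hbdd huA
  rw [← hα] at this
  linarith
end

section
/- Let b be a connected, canonically compactifiable graph over a finite discrete measure space (X,m), let c > 0, and let h ∈ ℓ²(X,m) with h not identically zero. Then there exists a constant C ∈ ℝ such that for every v ∈ D(Q) with ⟨h e^v, 1⟩ = c·m(X) the functional J(v) := (1/2)Q(v) + c·m(X)·v̄ satisfies J(v) ≥ (1/4)Q(v) + C. -/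
open scoped BigOperators

section Aux

lemma mink2 {ι : Type*} (F : Finset ι) (w f g : ι → ℝ) (hw : ∀ i, 0 ≤ w i) :
    Real.sqrt (∑ i ∈ F, w i * (f i + g i) ^ 2)
      ≤ Real.sqrt (∑ i ∈ F, w i * f i ^ 2) + Real.sqrt (∑ i ∈ F, w i * g i ^ 2) := by
  set A := Real.sqrt (∑ i ∈ F, w i * f i ^ 2) with hA
  set B := Real.sqrt (∑ i ∈ F, w i * g i ^ 2) with hB
  have hAnn : 0 ≤ A := Real.sqrt_nonneg _
  have hBnn : 0 ≤ B := Real.sqrt_nonneg _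
  have hfs : ∑ i ∈ F, w i * f i ^ 2 = A ^ 2 := by
    rw [hA, Real.sq_sqrt]
    exact Finset.sum_nonneg fun i _ => mul_nonneg (hw i) (sq_nonneg _)
  have hgs : ∑ i ∈ F, w i * g i ^ 2 = B ^ 2 := by
    rw [hB, Real.sq_sqrt]
    exact Finset.sum_nonneg fun i _ => mul_nonneg (hw i) (sq_nonneg _)
  have cs : (∑ i ∈ F, (Real.sqrt (w i) * f i) * (Real.sqrt (w i) * g i)) ^ 2
      ≤ (∑ i ∈ F, (Real.sqrt (w i) * f i) ^ 2) * ∑ i ∈ F, (Real.sqrt (w i) * g i) ^ 2 :=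
    Finset.sum_mul_sq_le_sq_mul_sq F _ _
  have hw2 : ∀ i, Real.sqrt (w i) ^ 2 = w i := fun i => Real.sq_sqrt (hw i)
  have cs' : (∑ i ∈ F, w i * (f i * g i)) ^ 2 ≤ A ^ 2 * B ^ 2 := by
    have e1 : ∑ i ∈ F, (Real.sqrt (w i) * f i) * (Real.sqrt (w i) * g i)
        = ∑ i ∈ F, w i * (f i * g i) := by
      apply Finset.sum_congr rfl; intro i _
      have h := hw2 i
      calc Real.sqrt (w i) * f i * (Real.sqrt (w i) * g i)
          = Real.sqrt (w i) ^ 2 * (f i * g i) := by ring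
        _ = w i * (f i * g i) := by rw [h]
    have e2 : ∑ i ∈ F, (Real.sqrt (w i) * f i) ^ 2 = A ^ 2 := by
      rw [← hfs]; apply Finset.sum_congr rfl; intro i _; rw [mul_pow, hw2]
    have e3 : ∑ i ∈ F, (Real.sqrt (w i) * g i) ^ 2 = B ^ 2 := by
      rw [← hgs]; apply Finset.sum_congr rfl; intro i _; rw [mul_pow, hw2]
    rw [e1, e2, e3] at cs; exact cs
  have hcross : ∑ i ∈ F, w i * (f i * g i) ≤ A * B := by
    have h1 : |∑ i ∈ F, w i * (f i * g i)| ≤ A * B := by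
      rw [← Real.sqrt_sq_eq_abs]
      calc Real.sqrt ((∑ i ∈ F, w i * (f i * g i)) ^ 2)
          ≤ Real.sqrt (A ^ 2 * B ^ 2) := Real.sqrt_le_sqrt cs'
        _ = A * B := by rw [← mul_pow, Real.sqrt_sq (mul_nonneg hAnn hBnn)]
    exact (abs_le.mp h1).2
  have key : ∑ i ∈ F, w i * (f i + g i) ^ 2 ≤ (A + B) ^ 2 := by
    have : ∑ i ∈ F, w i * (f i + g i) ^ 2
        = (∑ i ∈ F, w i * f i ^ 2) + 2 * (∑ i ∈ F, w i * (f i * g i))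
          + ∑ i ∈ F, w i * g i ^ 2 := by
      have e : ∀ i, w i * (f i + g i) ^ 2
          = w i * f i ^ 2 + 2 * (w i * (f i * g i)) + w i * g i ^ 2 := fun i => by ring
      simp only [e]
      rw [Finset.sum_add_distrib, Finset.sum_add_distrib, Finset.mul_sum]
    rw [this, hfs, hgs]; nlinarith
  calc Real.sqrt (∑ i ∈ F, w i * (f i + g i) ^ 2) ≤ Real.sqrt ((A + B) ^ 2) :=
        Real.sqrt_le_sqrt key
    _ = A + B := Real.sqrt_sq (by positivity)

lemma mink_many {ι : Type*} (F : Finset ι) (w : ι → ℝ) (hw : ∀ i, 0 ≤ w i)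
    (f : ℕ → ι → ℝ) (N : ℕ) :
    Real.sqrt (∑ i ∈ F, w i * (∑ n ∈ Finset.range N, f n i) ^ 2)
      ≤ ∑ n ∈ Finset.range N, Real.sqrt (∑ i ∈ F, w i * f n i ^ 2) := by
  induction N with
  | zero =>
    simp
  | succ N ih =>
    have e : ∀ i, (∑ n ∈ Finset.range (N + 1), f n i)
        = (∑ n ∈ Finset.range N, f n i) + f N i := fun i => Finset.sum_range_succ _ _
    simp only [e, Finset.sum_range_succ]
    calc Real.sqrt (∑ i ∈ F, w i * ((∑ n ∈ Finset.range N, f n i) + f N i) ^ 2)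
        ≤ Real.sqrt (∑ i ∈ F, w i * (∑ n ∈ Finset.range N, f n i) ^ 2)
          + Real.sqrt (∑ i ∈ F, w i * f N i ^ 2) := mink2 F w _ _ hw
      _ ≤ (∑ n ∈ Finset.range N, Real.sqrt (∑ i ∈ F, w i * f n i ^ 2))
          + Real.sqrt (∑ i ∈ F, w i * f N i ^ 2) := by linarith

variable {X : Type*} {b : X → X → ℝ} {m : X → ℝ}

lemma tsumE_nonneg (hb : IsGraph b) (u : X → ℝ) :
    0 ≤ ∑' p : X × X, b p.1 p.2 * (u p.1 - u p.2) ^ 2 :=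
  tsum_nonneg fun p => mul_nonneg (hb.nonneg _ _) (sq_nonneg _)

lemma energy_nonneg (hb : IsGraph b) (u : X → ℝ) : 0 ≤ energy b u := by
  have := tsumE_nonneg hb u
  unfold energy; linarith

lemma sum_le_twice_energy (hb : IsGraph b) {u : X → ℝ} (hu : FinEnergy b u)
    (F : Finset (X × X)) :
    ∑ p ∈ F, b p.1 p.2 * (u p.1 - u p.2) ^ 2 ≤ 2 * energy b u := by
  have h := Summable.sum_le_tsum F (fun p _ => mul_nonneg (hb.nonneg _ _) (sq_nonneg _)) hu
  unfold energy; linarith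

lemma term_le_twice_energy (hb : IsGraph b) {u : X → ℝ} (hu : FinEnergy b u)
    (x y : X) : b x y * (u x - u y) ^ 2 ≤ 2 * energy b u := by
  have h := Summable.le_tsum hu (x, y) (fun p _ => mul_nonneg (hb.nonneg _ _) (sq_nonneg _))
  unfold energy; linarith

lemma l2term_le (hm : FinMeasure m) {u : X → ℝ} (hu : MemL2 m u) (x : X) :
    u x ^ 2 * m x ≤ ∑' y, u y ^ 2 * m y :=
  Summable.le_tsum hu x (fun y _ => mul_nonneg (sq_nonneg _) (le_of_lt (hm.pos y)))

lemma memL2_abs {u : X → ℝ} (hu : MemL2 m u) : MemL2 m (fun x => |u x|) := by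
  unfold MemL2 at *
  simpa [sq_abs] using hu

lemma memL2_const (hm : FinMeasure m) (a : ℝ) : MemL2 m (fun _ => a) := by
  unfold MemL2
  simpa using hm.summable.mul_left (a ^ 2)

lemma memL2_sub {u v : X → ℝ} (hu : MemL2 m u) (hv : MemL2 m v) (hm : FinMeasure m) :
    MemL2 m (fun x => u x - v x) := by
  unfold MemL2 at *
  refine Summable.of_nonneg_of_le (fun x => mul_nonneg (sq_nonneg _) (le_of_lt (hm.pos x)))
    ?_ ((hu.mul_left 2).add (hv.mul_left 2))
  intro x
  have h1 : (u x - v x) ^ 2 ≤ 2 * u x ^ 2 + 2 * v x ^ 2 := by nlinarith [sq_nonneg (u x + v x)]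
  have h2 := hm.pos x
  simp only []
  nlinarith [mul_le_mul_of_nonneg_right h1 (le_of_lt h2)]

lemma finEnergy_abs (hb : IsGraph b) {u : X → ℝ} (hu : FinEnergy b u) :
    FinEnergy b (fun x => |u x|) := by
  unfold FinEnergy at *
  apply Summable.of_nonneg_of_le (fun p => mul_nonneg (hb.nonneg _ _) (sq_nonneg _)) _ hu
  intro p
  apply mul_le_mul_of_nonneg_left _ (hb.nonneg _ _)
  have h1 : |(|u p.1| - |u p.2|)| ≤ |u p.1 - u p.2| := abs_abs_sub_abs_le_abs_sub _ _
  calc (|u p.1| - |u p.2|) ^ 2 = |(|u p.1| - |u p.2|)| ^ 2 := (sq_abs _).symm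
    _ ≤ |u p.1 - u p.2| ^ 2 := by apply pow_le_pow_left₀ (abs_nonneg _) h1
    _ = (u p.1 - u p.2) ^ 2 := sq_abs _

lemma finEnergy_sub_const (hb : IsGraph b) {u : X → ℝ} (hu : FinEnergy b u) (a : ℝ) :
    FinEnergy b (fun x => u x - a) := by
  unfold FinEnergy at *
  have e : ∀ p : X × X, b p.1 p.2 * ((u p.1 - a) - (u p.2 - a)) ^ 2
      = b p.1 p.2 * (u p.1 - u p.2) ^ 2 := fun p => by ring
  simpa only [e] using hu

lemma energy_sub_const (u : X → ℝ) (a : ℝ) :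
    energy b (fun x => u x - a) = energy b u := by
  unfold energy
  congr 1
  apply tsum_congr
  intro p
  ring

lemma summable_abs_mul (hm : FinMeasure m) {u : X → ℝ} (hu : MemL2 m u) :
    Summable (fun x => |u x| * m x) := by
  refine Summable.of_nonneg_of_le (fun x => mul_nonneg (abs_nonneg _) (le_of_lt (hm.pos x)))
    ?_ ((hu.add hm.summable).div_const 2)
  intro x
  have h := hm.pos x
  nlinarith [sq_nonneg (|u x| - 1), sq_abs (u x)]

lemma summable_mul_m (hm : FinMeasure m) {u : X → ℝ} (hu : MemL2 m u) :
    Summable (fun x => u x * m x) := by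
  apply Summable.of_abs
  apply Summable.of_nonneg_of_le (fun x => abs_nonneg _) _ (summable_abs_mul hm hu)
  intro x
  rw [abs_mul, abs_of_pos (hm.pos x)]

lemma path_bound (hb : IsGraph b) (hconn : GraphConnected b) (x y : X) :
    ∃ c : ℝ, 0 ≤ c ∧ ∀ v : X → ℝ, FinEnergy b v →
      |v x - v y| ≤ c * Real.sqrt (energy b v) := by
  induction hconn x y with
  | refl => exact ⟨0, le_refl 0, fun v _ => by simp⟩
  | @tail z y _ hedge ih =>
    obtain ⟨c, hc, hcb⟩ := ih
    refine ⟨c + Real.sqrt (2 / b z y), by positivity, fun v hv => ?_⟩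
    have hE : 0 ≤ energy b v := energy_nonneg hb v
    have h1 : b z y * (v z - v y) ^ 2 ≤ 2 * energy b v := term_le_twice_energy hb hv z y
    have h2 : (v z - v y) ^ 2 ≤ 2 / b z y * energy b v := by
      rw [div_mul_eq_mul_div, le_div_iff₀ hedge]
      nlinarith
    have h3 : |v z - v y| ≤ Real.sqrt (2 / b z y) * Real.sqrt (energy b v) := by
      rw [← Real.sqrt_mul (by positivity)]
      rw [← Real.sqrt_sq_eq_abs]
      exact Real.sqrt_le_sqrt h2
    calc |v x - v y| ≤ |v x - v z| + |v z - v y| := by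
          have := abs_sub_abs_le_abs_sub (v x - v z) (v y - v z)
          exact abs_sub_le _ _ _
      _ ≤ c * Real.sqrt (energy b v) + Real.sqrt (2 / b z y) * Real.sqrt (energy b v) := by
          exact add_le_add (hcb v hv) h3
      _ = (c + Real.sqrt (2 / b z y)) * Real.sqrt (energy b v) := by ring

lemma uniform_sup_bound (hb : IsGraph b) (hm : FinMeasure m) (hcc : CanCompact b m) :
    ∃ K : ℝ, 0 ≤ K ∧ ∀ u : X → ℝ, MemDQ b m u → ∀ x, |u x| ≤ K * formNorm b m u := by
  by_contra hcon
  push_neg at hcon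
  have H : ∀ n : ℕ, ∃ u, MemDQ b m u ∧ ∃ x, (8 : ℝ) ^ n * formNorm b m u < |u x| :=
    fun n => hcon ((8 : ℝ) ^ n) (by positivity)
  choose u hmem xx hlt using H
  set F : ℕ → ℝ := fun n => formNorm b m (u n) with hF
  have hENnn : ∀ n, 0 ≤ ∑' y, (u n y) ^ 2 * m y := fun n =>
    tsum_nonneg fun y => mul_nonneg (sq_nonneg _) (le_of_lt (hm.pos y))
  have hFsq : ∀ n, F n ^ 2 = energy b (u n) + ∑' y, (u n y) ^ 2 * m y := by
    intro n
    rw [hF]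
    unfold formNorm
    exact Real.sq_sqrt (add_nonneg (energy_nonneg hb _) (hENnn n))
  have hFpos : ∀ n, 0 < F n := by
    intro n
    have h1 : 0 < |u n (xx n)| :=
      lt_of_le_of_lt (mul_nonneg (by positivity) (Real.sqrt_nonneg _)) (hlt n)
    have h2 : u n (xx n) ≠ 0 := fun h => by simp [h] at h1
    have h3 : 0 < (u n (xx n)) ^ 2 * m (xx n) :=
      mul_pos (by positivity) (hm.pos _)
    have h4 : 0 < ∑' y, (u n y) ^ 2 * m y := lt_of_lt_of_le h3 (l2term_le hm (hmem n).1 _)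
    rw [hF]
    unfold formNorm
    apply Real.sqrt_pos.mpr
    have := energy_nonneg hb (u n)
    linarith
  set w : ℕ → X → ℝ := fun n y => |u n y| / F n with hw
  have hwnn : ∀ n y, 0 ≤ w n y := fun n y => div_nonneg (abs_nonneg _) (le_of_lt (hFpos n))
  -- ℓ² bound for w n
  have hwL2summable : ∀ n, Summable (fun y => (w n y) ^ 2 * m y) := by
    intro n
    have e : ∀ y, (w n y) ^ 2 * m y = (1 / F n ^ 2) * ((u n y) ^ 2 * m y) := by
      intro y
      rw [hw]
      simp only []
      rw [div_pow, sq_abs]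
      field_simp
    simp only [e]
    exact ((hmem n).1).mul_left _
  have hwL2 : ∀ n, ∑' y, (w n y) ^ 2 * m y ≤ 1 := by
    intro n
    have e : ∀ y, (w n y) ^ 2 * m y = (1 / F n ^ 2) * ((u n y) ^ 2 * m y) := by
      intro y
      rw [hw]
      simp only []
      rw [div_pow, sq_abs]
      field_simp
    calc ∑' y, (w n y) ^ 2 * m y = (1 / F n ^ 2) * ∑' y, (u n y) ^ 2 * m y := by
          rw [← tsum_mul_left]
          exact tsum_congr e
      _ ≤ 1 := by
          rw [div_mul_eq_mul_div, one_mul, div_le_one (pow_pos (hFpos n) 2)]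
          rw [hFsq n]
          have := energy_nonneg hb (u n)
          linarith
  -- pointwise bound
  have hwpt : ∀ n y, w n y ≤ Real.sqrt (1 / m y) := by
    intro n y
    have h1 : (w n y) ^ 2 * m y ≤ 1 :=
      le_trans (Summable.le_tsum (hwL2summable n) y fun z _ =>
        mul_nonneg (sq_nonneg _) (le_of_lt (hm.pos z))) (hwL2 n)
    have h2 : (w n y) ^ 2 ≤ 1 / m y := by
      rw [le_div_iff₀ (hm.pos y)]
      linarith
    calc w n y = Real.sqrt ((w n y) ^ 2) := (Real.sqrt_sq (hwnn n y)).symm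
      _ ≤ Real.sqrt (1 / m y) := Real.sqrt_le_sqrt h2
  -- finite energy sum bound for w n
  have hwE : ∀ n, ∀ G : Finset (X × X),
      ∑ p ∈ G, b p.1 p.2 * (w n p.1 - w n p.2) ^ 2 ≤ 2 := by
    intro n G
    have e : ∀ p : X × X, b p.1 p.2 * (w n p.1 - w n p.2) ^ 2
        ≤ (1 / F n ^ 2) * (b p.1 p.2 * (u n p.1 - u n p.2) ^ 2) := by
      intro p
      rw [hw]
      have hFn : (0:ℝ) < F n ^ 2 := pow_pos (hFpos n) 2
      have habs : (|u n p.1| - |u n p.2|) ^ 2 ≤ (u n p.1 - u n p.2) ^ 2 := by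
        have h1 : |(|u n p.1| - |u n p.2|)| ≤ |u n p.1 - u n p.2| := abs_abs_sub_abs_le_abs_sub _ _
        calc (|u n p.1| - |u n p.2|) ^ 2 = |(|u n p.1| - |u n p.2|)| ^ 2 := (sq_abs _).symm
          _ ≤ |u n p.1 - u n p.2| ^ 2 := by
              apply pow_le_pow_left₀ (abs_nonneg _) h1
          _ = (u n p.1 - u n p.2) ^ 2 := sq_abs _
      have e2 : |u n p.1| / F n - |u n p.2| / F n = (|u n p.1| - |u n p.2|) / F n := by
        ring
      rw [e2, div_pow]
      rw [div_eq_mul_inv, mul_comm ((|u n p.1| - |u n p.2|) ^ 2) _]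
      have hbnn := hb.nonneg p.1 p.2
      calc b p.1 p.2 * ((F n ^ 2)⁻¹ * (|u n p.1| - |u n p.2|) ^ 2)
          ≤ b p.1 p.2 * ((F n ^ 2)⁻¹ * (u n p.1 - u n p.2) ^ 2) := by
            apply mul_le_mul_of_nonneg_left _ hbnn
            apply mul_le_mul_of_nonneg_left habs (le_of_lt (inv_pos.mpr (pow_pos (hFpos n) 2)))
        _ = (1 / F n ^ 2) * (b p.1 p.2 * (u n p.1 - u n p.2) ^ 2) := by ring
    calc ∑ p ∈ G, b p.1 p.2 * (w n p.1 - w n p.2) ^ 2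
        ≤ ∑ p ∈ G, (1 / F n ^ 2) * (b p.1 p.2 * (u n p.1 - u n p.2) ^ 2) :=
          Finset.sum_le_sum fun p _ => e p
      _ = (1 / F n ^ 2) * ∑ p ∈ G, b p.1 p.2 * (u n p.1 - u n p.2) ^ 2 := by
          rw [Finset.mul_sum]
      _ ≤ (1 / F n ^ 2) * (2 * energy b (u n)) := by
          apply mul_le_mul_of_nonneg_left (sum_le_twice_energy hb (hmem n).2 G) (by positivity)
      _ ≤ 2 := by
          rw [div_mul_eq_mul_div, one_mul, div_le_iff₀ (pow_pos (hFpos n) 2)]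
          rw [hFsq n]
          have := hENnn n
          linarith
  -- value at xx n
  have hwval : ∀ n, (8 : ℝ) ^ n < w n (xx n) := by
    intro n
    rw [hw]
    rw [lt_div_iff₀ (hFpos n)]
    exact hlt n
  -- the function g
  have hgeo : Summable (fun n : ℕ => ((1:ℝ) / 2) ^ n) :=
    summable_geometric_of_lt_one (by norm_num) (by norm_num)
  have hsumy : ∀ y, Summable (fun n : ℕ => ((1:ℝ) / 2) ^ n * w n y) := by
    intro y
    apply Summable.of_nonneg_of_le
      (fun n => mul_nonneg (by positivity) (hwnn n y))
      (fun n => mul_le_mul_of_nonneg_left (hwpt n y) (by positivity))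
    exact hgeo.mul_right _
  set g : X → ℝ := fun y => ∑' n, ((1:ℝ) / 2) ^ n * w n y with hg
  have hgnn : ∀ y, 0 ≤ g y := fun y =>
    tsum_nonneg fun n => mul_nonneg (by positivity) (hwnn n y)
  -- partial sums
  set s : ℕ → X → ℝ := fun N y => ∑ n ∈ Finset.range N, ((1:ℝ) / 2) ^ n * w n y with hs
  have hstend : ∀ y, Filter.Tendsto (fun N => s N y) Filter.atTop (nhds (g y)) := by
    intro y
    exact (hsumy y).hasSum.tendsto_sum_nat
  -- ℓ² bound for g
  have hgL2sum : ∀ G : Finset X, ∑ y ∈ G, (g y) ^ 2 * m y ≤ 4 := by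
    intro G
    have tend : Filter.Tendsto (fun N => ∑ y ∈ G, (s N y) ^ 2 * m y) Filter.atTop
        (nhds (∑ y ∈ G, (g y) ^ 2 * m y)) := by
      apply tendsto_finset_sum
      intro y _
      exact ((hstend y).pow 2).mul_const (m y)
    apply le_of_tendsto tend
    apply Filter.Eventually.of_forall
    intro N
    have comm : ∑ y ∈ G, (s N y) ^ 2 * m y = ∑ y ∈ G, m y * (s N y) ^ 2 :=
      Finset.sum_congr rfl fun y _ => mul_comm _ _
    have step : Real.sqrt (∑ y ∈ G, m y * (s N y) ^ 2)
        ≤ ∑ n ∈ Finset.range N, Real.sqrt (∑ y ∈ G, m y * (((1:ℝ)/2) ^ n * w n y) ^ 2) := by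
      apply mink_many G m (fun y => le_of_lt (hm.pos y))
    have pern : ∀ n, Real.sqrt (∑ y ∈ G, m y * (((1:ℝ)/2) ^ n * w n y) ^ 2) ≤ ((1:ℝ)/2) ^ n := by
      intro n
      have e : ∑ y ∈ G, m y * (((1:ℝ)/2) ^ n * w n y) ^ 2
          = (((1:ℝ)/2) ^ n) ^ 2 * ∑ y ∈ G, (w n y) ^ 2 * m y := by
        rw [Finset.mul_sum]
        apply Finset.sum_congr rfl
        intro y _
        ring
      rw [e]
      have hle : ∑ y ∈ G, (w n y) ^ 2 * m y ≤ 1 := by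
        apply le_trans _ (hwL2 n)
        exact Summable.sum_le_tsum G (fun y _ => mul_nonneg (sq_nonneg _) (le_of_lt (hm.pos y)))
          (hwL2summable n)
      calc Real.sqrt ((((1:ℝ)/2) ^ n) ^ 2 * ∑ y ∈ G, (w n y) ^ 2 * m y)
          ≤ Real.sqrt ((((1:ℝ)/2) ^ n) ^ 2 * 1) := by
            apply Real.sqrt_le_sqrt
            apply mul_le_mul_of_nonneg_left hle (by positivity)
        _ = ((1:ℝ)/2) ^ n := by
            rw [mul_one, Real.sqrt_sq (by positivity)]
    have sqrtle : Real.sqrt (∑ y ∈ G, m y * (s N y) ^ 2) ≤ 2 := by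
      apply le_trans step
      calc ∑ n ∈ Finset.range N, Real.sqrt (∑ y ∈ G, m y * (((1:ℝ)/2) ^ n * w n y) ^ 2)
          ≤ ∑ n ∈ Finset.range N, ((1:ℝ)/2) ^ n := Finset.sum_le_sum fun n _ => pern n
        _ ≤ ∑' n : ℕ, ((1:ℝ)/2) ^ n := Summable.sum_le_tsum _ (fun n _ => by positivity) hgeo
        _ = 2 := by
            rw [tsum_geometric_of_lt_one (by norm_num) (by norm_num)]
            norm_num
    have sumnn : 0 ≤ ∑ y ∈ G, m y * (s N y) ^ 2 :=
      Finset.sum_nonneg fun y _ => mul_nonneg (le_of_lt (hm.pos y)) (sq_nonneg _)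
    rw [comm]
    calc ∑ y ∈ G, m y * (s N y) ^ 2 = Real.sqrt (∑ y ∈ G, m y * (s N y) ^ 2) ^ 2 :=
        (Real.sq_sqrt sumnn).symm
      _ ≤ 2 ^ 2 := by
          apply pow_le_pow_left₀ (Real.sqrt_nonneg _) sqrtle
      _ = 4 := by norm_num
  have hgL2 : MemL2 m g :=
    summable_of_sum_le (fun y => mul_nonneg (sq_nonneg _) (le_of_lt (hm.pos y))) hgL2sum
  -- energy bound for g
  have hgEsum : ∀ G : Finset (X × X), ∑ p ∈ G, b p.1 p.2 * (g p.1 - g p.2) ^ 2 ≤ 8 := by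
    intro G
    have tend : Filter.Tendsto (fun N => ∑ p ∈ G, b p.1 p.2 * (s N p.1 - s N p.2) ^ 2)
        Filter.atTop (nhds (∑ p ∈ G, b p.1 p.2 * (g p.1 - g p.2) ^ 2)) := by
      apply tendsto_finset_sum
      intro p _
      exact (Filter.Tendsto.pow ((hstend p.1).sub (hstend p.2)) 2).const_mul _
    apply le_of_tendsto tend
    apply Filter.Eventually.of_forall
    intro N
    have ediff : ∀ p : X × X, s N p.1 - s N p.2
        = ∑ n ∈ Finset.range N, (((1:ℝ)/2) ^ n * w n p.1 - ((1:ℝ)/2) ^ n * w n p.2) := by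
      intro p
      rw [hs]
      rw [← Finset.sum_sub_distrib]
    have comm : ∑ p ∈ G, b p.1 p.2 * (s N p.1 - s N p.2) ^ 2
        = ∑ p ∈ G, b p.1 p.2 *
            (∑ n ∈ Finset.range N, (((1:ℝ)/2) ^ n * w n p.1 - ((1:ℝ)/2) ^ n * w n p.2)) ^ 2 :=
      Finset.sum_congr rfl fun p _ => by rw [ediff p]
    have step := mink_many G (fun p : X × X => b p.1 p.2) (fun p => hb.nonneg p.1 p.2)
      (fun n p => ((1:ℝ)/2) ^ n * w n p.1 - ((1:ℝ)/2) ^ n * w n p.2) N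
    have pern : ∀ n, Real.sqrt (∑ p ∈ G, b p.1 p.2 *
        (((1:ℝ)/2) ^ n * w n p.1 - ((1:ℝ)/2) ^ n * w n p.2) ^ 2)
        ≤ ((1:ℝ)/2) ^ n * Real.sqrt 2 := by
      intro n
      have e : ∑ p ∈ G, b p.1 p.2 * (((1:ℝ)/2) ^ n * w n p.1 - ((1:ℝ)/2) ^ n * w n p.2) ^ 2
          = (((1:ℝ)/2) ^ n) ^ 2 * ∑ p ∈ G, b p.1 p.2 * (w n p.1 - w n p.2) ^ 2 := by
        rw [Finset.mul_sum]
        apply Finset.sum_congr rfl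
        intro p _
        ring
      rw [e]
      calc Real.sqrt ((((1:ℝ)/2) ^ n) ^ 2 * ∑ p ∈ G, b p.1 p.2 * (w n p.1 - w n p.2) ^ 2)
          ≤ Real.sqrt ((((1:ℝ)/2) ^ n) ^ 2 * 2) := by
            apply Real.sqrt_le_sqrt
            apply mul_le_mul_of_nonneg_left (hwE n G) (by positivity)
        _ = ((1:ℝ)/2) ^ n * Real.sqrt 2 := by
            rw [Real.sqrt_mul (by positivity), Real.sqrt_sq (by positivity)]
    have sqrtle : Real.sqrt (∑ p ∈ G, b p.1 p.2 * (s N p.1 - s N p.2) ^ 2)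
        ≤ 2 * Real.sqrt 2 := by
      rw [comm]
      apply le_trans step
      calc ∑ n ∈ Finset.range N, Real.sqrt (∑ p ∈ G, b p.1 p.2 *
            (((1:ℝ)/2) ^ n * w n p.1 - ((1:ℝ)/2) ^ n * w n p.2) ^ 2)
          ≤ ∑ n ∈ Finset.range N, ((1:ℝ)/2) ^ n * Real.sqrt 2 :=
            Finset.sum_le_sum fun n _ => pern n
        _ = (∑ n ∈ Finset.range N, ((1:ℝ)/2) ^ n) * Real.sqrt 2 := by
            rw [Finset.sum_mul]
        _ ≤ 2 * Real.sqrt 2 := by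
            apply mul_le_mul_of_nonneg_right _ (Real.sqrt_nonneg _)
            calc ∑ n ∈ Finset.range N, ((1:ℝ)/2) ^ n
                ≤ ∑' n : ℕ, ((1:ℝ)/2) ^ n := Summable.sum_le_tsum _ (fun n _ => by positivity) hgeo
              _ = 2 := by
                  rw [tsum_geometric_of_lt_one (by norm_num) (by norm_num)]
                  norm_num
    have sumnn : 0 ≤ ∑ p ∈ G, b p.1 p.2 * (s N p.1 - s N p.2) ^ 2 :=
      Finset.sum_nonneg fun p _ => mul_nonneg (hb.nonneg _ _) (sq_nonneg _)
    calc ∑ p ∈ G, b p.1 p.2 * (s N p.1 - s N p.2) ^ 2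
        = Real.sqrt (∑ p ∈ G, b p.1 p.2 * (s N p.1 - s N p.2) ^ 2) ^ 2 :=
          (Real.sq_sqrt sumnn).symm
      _ ≤ (2 * Real.sqrt 2) ^ 2 := pow_le_pow_left₀ (Real.sqrt_nonneg _) sqrtle 2
      _ = 8 := by
          rw [mul_pow, Real.sq_sqrt (by norm_num)]
          norm_num
  have hgE : FinEnergy b g :=
    summable_of_sum_le (fun p => mul_nonneg (hb.nonneg _ _) (sq_nonneg _)) hgEsum
  -- contradiction
  obtain ⟨M, hM⟩ := hcc g ⟨hgL2, hgE⟩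
  obtain ⟨n, hn⟩ := pow_unbounded_of_one_lt M (by norm_num : (1:ℝ) < 4)
  have h1 : ((1:ℝ)/2) ^ n * w n (xx n) ≤ g (xx n) := by
    apply Summable.le_tsum (hsumy (xx n)) n
    intro k _
    exact mul_nonneg (by positivity) (hwnn k _)
  have h2 : (4:ℝ) ^ n < g (xx n) := by
    have h3 : ((1:ℝ)/2) ^ n * (8:ℝ) ^ n = (4:ℝ) ^ n := by
      rw [← mul_pow]
      norm_num
    have h4 : ((1:ℝ)/2) ^ n * (8:ℝ) ^ n < ((1:ℝ)/2) ^ n * w n (xx n) := by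
      apply mul_lt_mul_of_pos_left (hwval n) (by positivity)
    linarith
  have h5 := hM (xx n)
  have h6 : |g (xx n)| = g (xx n) := abs_of_nonneg (hgnn _)
  rw [h6] at h5
  linarith

set_option maxHeartbeats 1600000 in
lemma poincare (hb : IsGraph b) (hconn : GraphConnected b) (hm : FinMeasure m)
    (hcc : CanCompact b m) [Nonempty X] :
    ∃ Cp : ℝ, 0 ≤ Cp ∧ ∀ v : X → ℝ, MemDQ b m v →
      ∑' x, (v x - mean m v) ^ 2 * m x ≤ Cp * energy b v := by
  obtain ⟨K, hK0, hKb⟩ := uniform_sup_bound hb hm hcc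
  obtain ⟨M, hMdef⟩ : ∃ M : ℝ, (∑' x, m x) = M := ⟨_, rfl⟩
  obtain ⟨x₀⟩ := (inferInstance : Nonempty X)
  have hMpos : 0 < M := by
    rw [← hMdef]
    exact lt_of_lt_of_le (hm.pos x₀) (Summable.le_tsum hm.summable x₀ fun y _ => le_of_lt (hm.pos y))
  obtain ⟨ε, hεdef⟩ : ∃ ε : ℝ, min M (1 / (64 * K ^ 2 + 64)) = ε := ⟨_, rfl⟩
  have hε0 : 0 < ε := by rw [← hεdef]; exact lt_min hMpos (by positivity)
  have hεM : ε ≤ M := by rw [← hεdef]; exact min_le_left _ _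
  have hεK : ε ≤ 1 / (64 * K ^ 2 + 64) := by rw [← hεdef]; exact min_le_right _ _
  obtain ⟨F, hF⟩ : ∃ F : Finset X, M - ε < ∑ x ∈ F, m x := by
    have hha : HasSum m M := hMdef ▸ hm.summable.hasSum
    have hev := hha.eventually (eventually_gt_nhds (show M - ε < M by linarith))
    exact hev.exists
  have htail : ∑' x : {y // y ∉ F}, m ↑x ≤ ε := by
    have hsplit := Summable.sum_add_tsum_subtype_compl hm.summable F
    rw [hMdef] at hsplit
    linarith [hsplit]
  choose c hc0 hcb using fun x => path_bound hb hconn x x₀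
  obtain ⟨a, hadef⟩ : ∃ a : ℝ, (∑ y ∈ F, c y * m y) / M = a := ⟨_, rfl⟩
  obtain ⟨bb, hbbdef⟩ : ∃ bb : ℝ, (∑ y ∈ F, (c y) ^ 2 * m y) = bb := ⟨_, rfl⟩
  have ha0 : 0 ≤ a := by
    rw [← hadef]
    exact div_nonneg
      (Finset.sum_nonneg fun y _ => mul_nonneg (hc0 y) (le_of_lt (hm.pos y))) (le_of_lt hMpos)
  have hbb0 : 0 ≤ bb := by
    rw [← hbbdef]
    exact Finset.sum_nonneg fun y _ => mul_nonneg (sq_nonneg _) (le_of_lt (hm.pos y))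
  refine ⟨4 * bb + 8 * M * a ^ 2 + 1,
    by linarith [hbb0, mul_nonneg hMpos.le (sq_nonneg a)], ?_⟩
  intro v hv
  obtain ⟨E, hEdef⟩ : ∃ E : ℝ, energy b v = E := ⟨_, rfl⟩
  have hE0 : 0 ≤ E := hEdef ▸ energy_nonneg hb v
  obtain ⟨sE, hsEdef⟩ : ∃ sE : ℝ, Real.sqrt E = sE := ⟨_, rfl⟩
  have hsE0 : 0 ≤ sE := hsEdef ▸ Real.sqrt_nonneg _
  have hsEsq : sE ^ 2 = E := by rw [← hsEdef]; exact Real.sq_sqrt hE0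
  obtain ⟨vb, hvbdef⟩ : ∃ vb : ℝ, mean m v = vb := ⟨_, rfl⟩
  have hwDQ : MemDQ b m (fun x => v x - vb) := ⟨memL2_sub hv.1 (memL2_const hm vb) hm,
    finEnergy_sub_const hb hv.2 vb⟩
  obtain ⟨D2, hD2def⟩ : ∃ D2 : ℝ, (∑' x, (v x - vb) ^ 2 * m x) = D2 := ⟨_, rfl⟩
  have hD20 : 0 ≤ D2 := by
    rw [← hD2def]
    exact tsum_nonneg fun x => mul_nonneg (sq_nonneg _) (le_of_lt (hm.pos x))
  have hEw : energy b (fun x => v x - vb) = E := by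
    rw [energy_sub_const, hEdef]
  obtain ⟨sED, hsEDdef⟩ : ∃ sED : ℝ, Real.sqrt (E + D2) = sED := ⟨_, rfl⟩
  have hsED0 : 0 ≤ sED := hsEDdef ▸ Real.sqrt_nonneg _
  have hsEDsq : sED ^ 2 = E + D2 := by rw [← hsEDdef]; exact Real.sq_sqrt (by linarith)
  have hS : ∀ x, |v x - vb| ≤ K * sED := by
    intro x
    have h1 := hKb _ hwDQ x
    have h2 : formNorm b m (fun x => v x - vb) = sED := by
      unfold formNorm
      rw [hEw, hD2def, hsEDdef]
    rwa [h2] at h1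
  have hSsq : ∀ x, (v x - vb) ^ 2 ≤ K ^ 2 * (E + D2) := by
    intro x
    have h1 := hS x
    calc (v x - vb) ^ 2 = |v x - vb| ^ 2 := (sq_abs _).symm
      _ ≤ (K * sED) ^ 2 := pow_le_pow_left₀ (abs_nonneg _) h1 2
      _ = K ^ 2 * (E + D2) := by rw [mul_pow, hsEDsq]
  have hP' : ∀ x, |v x - v x₀| ≤ c x * sE := by
    intro x
    have := hcb x v hv.2
    rwa [hEdef, hsEdef] at this
  -- mean identity
  have hvm : Summable (fun y => v y * m y) := summable_mul_m hm hv.1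
  have hcm : Summable (fun y => v x₀ * m y) := hm.summable.mul_left _
  have hid : ∑' y, (v x₀ - v y) * m y = v x₀ * M - ∑' y, v y * m y := by
    have e : ∀ y, (v x₀ - v y) * m y = v x₀ * m y - v y * m y := fun y => by ring
    calc ∑' y, (v x₀ - v y) * m y = ∑' y, (v x₀ * m y - v y * m y) := tsum_congr e
      _ = (∑' y, v x₀ * m y) - ∑' y, v y * m y := Summable.tsum_sub hcm hvm
      _ = v x₀ * M - ∑' y, v y * m y := by rw [tsum_mul_left, hMdef]
  have hmeanid : v x₀ - vb = (∑' y, (v x₀ - v y) * m y) / M := by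
    rw [hid, ← hvbdef]
    unfold mean
    rw [hMdef]
    field_simp
  obtain ⟨P, hPdef⟩ : ∃ P : ℝ, |v x₀ - vb| = P := ⟨_, rfl⟩
  have hP0 : 0 ≤ P := hPdef ▸ abs_nonneg _
  have habs_sum : Summable (fun y => |v x₀ - v y| * m y) := by
    refine Summable.of_nonneg_of_le
      (fun y => mul_nonneg (abs_nonneg _) (le_of_lt (hm.pos y))) ?_
      ((hm.summable.mul_left (|v x₀|)).add (summable_abs_mul hm hv.1))
    intro y
    have h1 : |v x₀ - v y| ≤ |v x₀| + |v y| := abs_sub _ _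
    have h2 := hm.pos y
    calc |v x₀ - v y| * m y ≤ (|v x₀| + |v y|) * m y :=
          mul_le_mul_of_nonneg_right h1 (le_of_lt h2)
      _ = |v x₀| * m y + |v y| * m y := by ring
  have hPbound : P ≤ a * sE + (2 * K * ε / M) * sED := by
    have h1 : P = |∑' y, (v x₀ - v y) * m y| / M := by
      rw [← hPdef, hmeanid, abs_div, abs_of_pos hMpos]
    have h2 : |∑' y, (v x₀ - v y) * m y| ≤ ∑' y, |v x₀ - v y| * m y := by
      have e : ∀ y, |(v x₀ - v y) * m y| = |v x₀ - v y| * m y := fun y => by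
        rw [abs_mul, abs_of_pos (hm.pos y)]
      have hsn : Summable (fun y => ‖(v x₀ - v y) * m y‖) := by
        simp only [Real.norm_eq_abs, e]
        exact habs_sum
      have h3 := norm_tsum_le_tsum_norm hsn
      simp only [Real.norm_eq_abs, e] at h3
      exact h3
    have hsplit := Summable.sum_add_tsum_subtype_compl habs_sum F
    have hfin : ∑ y ∈ F, |v x₀ - v y| * m y ≤ a * M * sE := by
      have h3 : ∀ y ∈ F, |v x₀ - v y| * m y ≤ c y * m y * sE := by
        intro y _
        have h4 : |v x₀ - v y| = |v y - v x₀| := abs_sub_comm _ _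
        have h5 := hP' y
        rw [h4]
        have h6 := hm.pos y
        calc |v y - v x₀| * m y ≤ (c y * sE) * m y :=
              mul_le_mul_of_nonneg_right h5 (le_of_lt h6)
          _ = c y * m y * sE := by ring
      calc ∑ y ∈ F, |v x₀ - v y| * m y ≤ ∑ y ∈ F, c y * m y * sE :=
            Finset.sum_le_sum h3
        _ = (∑ y ∈ F, c y * m y) * sE := by rw [Finset.sum_mul]
        _ = a * M * sE := by
            rw [← hadef]
            field_simp
    have hco : ∑' y : {x // x ∉ F}, |v x₀ - (v (↑y))| * m ↑y ≤ 2 * K * sED * ε := by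
      have h7 : ∀ y : {x // x ∉ F}, |v x₀ - v (↑y)| * m ↑y
          ≤ (2 * K * sED) * m ↑y := by
        intro y
        have h9 : |v x₀ - v ↑y| ≤ 2 * K * sED := by
          have h8 : v x₀ - v ↑y = (v x₀ - vb) - (v ↑y - vb) := by ring
          rw [h8]
          calc |(v x₀ - vb) - (v ↑y - vb)| ≤ |v x₀ - vb| + |v ↑y - vb| := abs_sub _ _
            _ ≤ K * sED + K * sED := add_le_add (hS _) (hS _)
            _ = 2 * K * sED := by ring
        exact mul_le_mul_of_nonneg_right h9 (le_of_lt (hm.pos _))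
      calc ∑' y : {x // x ∉ F}, |v x₀ - (v ↑y)| * m ↑y
          ≤ ∑' y : {x // x ∉ F}, (2 * K * sED) * m ↑y :=
            Summable.tsum_le_tsum h7 (habs_sum.subtype {x | x ∉ F})
              ((hm.summable.subtype {x | x ∉ F}).mul_left _)
        _ = (2 * K * sED) * ∑' y : {x // x ∉ F}, m ↑y := tsum_mul_left
        _ ≤ 2 * K * sED * ε := by
            apply mul_le_mul_of_nonneg_left htail (by positivity)
    have h10 : ∑' y, |v x₀ - v y| * m y ≤ a * M * sE + 2 * K * sED * ε := by
      rw [← hsplit]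
      exact add_le_add hfin hco
    rw [h1, div_le_iff₀ hMpos]
    calc |∑' y, (v x₀ - v y) * m y| ≤ ∑' y, |v x₀ - v y| * m y := h2
      _ ≤ a * M * sE + 2 * K * sED * ε := h10
      _ = (a * sE + 2 * K * ε / M * sED) * M := by
          field_simp
  -- split D2
  have hD2split := Summable.sum_add_tsum_subtype_compl hwDQ.1 F
  beta_reduce at hD2split
  rw [hD2def] at hD2split
  have hfinD2 : ∑ x ∈ F, (v x - vb) ^ 2 * m x ≤ 2 * bb * E + 2 * P ^ 2 * M := by
    have h11 : ∀ x ∈ F, (v x - vb) ^ 2 * m x ≤ (2 * (c x) ^ 2 * E + 2 * P ^ 2) * m x := by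
      intro x _
      have h13 : (v x - v x₀) ^ 2 ≤ (c x) ^ 2 * E := by
        have := hP' x
        calc (v x - v x₀) ^ 2 = |v x - v x₀| ^ 2 := (sq_abs _).symm
          _ ≤ (c x * sE) ^ 2 := pow_le_pow_left₀ (abs_nonneg _) this 2
          _ = (c x) ^ 2 * E := by rw [mul_pow, hsEsq]
      have h14 : (v x₀ - vb) ^ 2 ≤ P ^ 2 := by
        rw [← hPdef, ← sq_abs (v x₀ - vb)]
      have h15 : (v x - vb) ^ 2 ≤ 2 * (c x) ^ 2 * E + 2 * P ^ 2 := by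
        nlinarith [sq_nonneg ((v x - v x₀) - (v x₀ - vb))]
      exact mul_le_mul_of_nonneg_right h15 (le_of_lt (hm.pos x))
    calc ∑ x ∈ F, (v x - vb) ^ 2 * m x
        ≤ ∑ x ∈ F, (2 * (c x) ^ 2 * E + 2 * P ^ 2) * m x := Finset.sum_le_sum h11
      _ = 2 * E * (∑ x ∈ F, (c x) ^ 2 * m x) + 2 * P ^ 2 * ∑ x ∈ F, m x := by
          rw [Finset.mul_sum, Finset.mul_sum, ← Finset.sum_add_distrib]
          apply Finset.sum_congr rfl
          intro x _
          ring
      _ ≤ 2 * bb * E + 2 * P ^ 2 * M := by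
          have h16 : ∑ x ∈ F, m x ≤ M := by
            rw [← hMdef]
            exact Summable.sum_le_tsum F (fun x _ => le_of_lt (hm.pos x)) hm.summable
          rw [hbbdef]
          have h17 := mul_le_mul_of_nonneg_left h16 (by positivity : (0:ℝ) ≤ 2 * P ^ 2)
          linarith
  have hcoD2 : ∑' x : {y // y ∉ F}, (v ↑x - vb) ^ 2 * m ↑x ≤ K ^ 2 * (E + D2) * ε := by
    have hED' : 0 ≤ E + D2 := by linarith
    calc ∑' x : {y // y ∉ F}, (v ↑x - vb) ^ 2 * m ↑x
        ≤ ∑' x : {y // y ∉ F}, (K ^ 2 * (E + D2)) * m ↑x := by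
          apply Summable.tsum_le_tsum _ (hwDQ.1.subtype {x | x ∉ F})
            ((hm.summable.subtype {x | x ∉ F}).mul_left _)
          intro x
          exact mul_le_mul_of_nonneg_right (hSsq _) (le_of_lt (hm.pos _))
      _ = (K ^ 2 * (E + D2)) * ∑' x : {y // y ∉ F}, m ↑x := tsum_mul_left
      _ ≤ K ^ 2 * (E + D2) * ε := by
          apply mul_le_mul_of_nonneg_left htail (by positivity)
  have hD2le : D2 ≤ 2 * bb * E + 2 * P ^ 2 * M + K ^ 2 * (E + D2) * ε := by
    linarith [hfinD2, hcoD2, hD2split]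
  -- bound P²
  have hP2 : P ^ 2 ≤ 2 * a ^ 2 * E + 2 * (2 * K * ε / M) ^ 2 * (E + D2) := by
    have hq0 : 0 ≤ (2 * K * ε / M) * sED := by positivity
    have hp0 : 0 ≤ a * sE := mul_nonneg ha0 hsE0
    have hpq : P ^ 2 ≤ (a * sE + (2 * K * ε / M) * sED) ^ 2 :=
      pow_le_pow_left₀ hP0 hPbound 2
    have h2sq : (a * sE + (2 * K * ε / M) * sED) ^ 2
        ≤ 2 * (a * sE) ^ 2 + 2 * ((2 * K * ε / M) * sED) ^ 2 := by
      nlinarith [sq_nonneg (a * sE - (2 * K * ε / M) * sED)]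
    have e1 : (a * sE) ^ 2 = a ^ 2 * E := by rw [mul_pow, hsEsq]
    have e2 : ((2 * K * ε / M) * sED) ^ 2 = (2 * K * ε / M) ^ 2 * (E + D2) := by
      rw [mul_pow, hsEDsq]
    linarith [hpq, h2sq, e1.le, e1.ge, e2.le, e2.ge]
  -- β bound
  have hβ : 16 * K ^ 2 * ε ^ 2 / M + K ^ 2 * ε ≤ 1 / 2 := by
    have hd : (0:ℝ) < 64 * K ^ 2 + 64 := by positivity
    have hb1 : 16 * K ^ 2 * ε ^ 2 / M ≤ 16 * K ^ 2 * ε := by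
      rw [div_le_iff₀ hMpos]
      have h0 : (0:ℝ) ≤ 16 * K ^ 2 * ε := by positivity
      have h1 := mul_le_mul_of_nonneg_left hεM h0
      have e : 16 * K ^ 2 * ε * ε = 16 * K ^ 2 * ε ^ 2 := by ring
      linarith
    have hb2 : 16 * K ^ 2 * ε ≤ 1 / 4 := by
      have h18 : 16 * K ^ 2 * ε ≤ 16 * K ^ 2 * (1 / (64 * K ^ 2 + 64)) :=
        mul_le_mul_of_nonneg_left hεK (by positivity)
      have h19 : 16 * K ^ 2 * (1 / (64 * K ^ 2 + 64)) ≤ 1 / 4 := by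
        rw [mul_one_div, div_le_div_iff₀ hd (by norm_num)]
        linarith [sq_nonneg K]
      linarith
    have hb3 : K ^ 2 * ε ≤ 1 / 4 := by
      have h20 : K ^ 2 * ε ≤ K ^ 2 * (1 / (64 * K ^ 2 + 64)) :=
        mul_le_mul_of_nonneg_left hεK (by positivity)
      have h21 : K ^ 2 * (1 / (64 * K ^ 2 + 64)) ≤ 1 / 4 := by
        rw [mul_one_div, div_le_div_iff₀ hd (by norm_num)]
        linarith [sq_nonneg K]
      linarith
    linarith
  -- combine
  have hfinal : D2 ≤ (2 * bb + 4 * M * a ^ 2) * E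
      + (16 * K ^ 2 * ε ^ 2 / M + K ^ 2 * ε) * (E + D2) := by
    have h23 : 2 * M * (2 * a ^ 2 * E + 2 * (2 * K * ε / M) ^ 2 * (E + D2))
        = 4 * M * a ^ 2 * E + (16 * K ^ 2 * ε ^ 2 / M) * (E + D2) := by
      field_simp
      ring
    have h22 := mul_le_mul_of_nonneg_left hP2 (by linarith : (0:ℝ) ≤ 2 * M)
    linarith [hD2le, h22, h23.le, h23.ge]
  have hED : 0 ≤ E + D2 := by linarith
  have hbeta0 : 0 ≤ 16 * K ^ 2 * ε ^ 2 / M + K ^ 2 * ε := by positivity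
  have h24 : (16 * K ^ 2 * ε ^ 2 / M + K ^ 2 * ε) * (E + D2) ≤ (1 / 2) * (E + D2) :=
    mul_le_mul_of_nonneg_right hβ hED
  have hlast : D2 ≤ (4 * bb + 8 * M * a ^ 2 + 1) * E := by linarith [hfinal, h24]
  rw [hvbdef, hD2def, hEdef]
  exact hlast


lemma sup_mean_bound (hb : IsGraph b) (hconn : GraphConnected b) (hm : FinMeasure m)
    (hcc : CanCompact b m) [Nonempty X] :
    ∃ A : ℝ, 0 ≤ A ∧ ∀ v : X → ℝ, MemDQ b m v → ∀ x,
      |v x - mean m v| ≤ A * Real.sqrt (energy b v) := by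
  obtain ⟨K, hK0, hKb⟩ := uniform_sup_bound hb hm hcc
  obtain ⟨Cp, hCp0, hCpb⟩ := poincare hb hconn hm hcc
  refine ⟨K * Real.sqrt (1 + Cp), by positivity, ?_⟩
  intro v hv x
  set vb : ℝ := mean m v with hvbdef
  set w : X → ℝ := fun x => v x - vb with hwdef
  have hwDQ : MemDQ b m w := ⟨memL2_sub hv.1 (memL2_const hm vb) hm,
    finEnergy_sub_const hb hv.2 vb⟩
  have hE0 : 0 ≤ energy b v := energy_nonneg hb v
  have hformw : formNorm b m w
      = Real.sqrt (energy b v + ∑' x, (w x) ^ 2 * m x) := by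
    unfold formNorm
    rw [energy_sub_const]
  have h1 := hKb w hwDQ x
  rw [hformw] at h1
  have h2 : ∑' x, (w x) ^ 2 * m x ≤ Cp * energy b v := hCpb v hv
  have h3 : Real.sqrt (energy b v + ∑' x, (w x) ^ 2 * m x)
      ≤ Real.sqrt ((1 + Cp) * energy b v) := by
    apply Real.sqrt_le_sqrt
    linarith
  have h4 : Real.sqrt ((1 + Cp) * energy b v)
      = Real.sqrt (1 + Cp) * Real.sqrt (energy b v) := Real.sqrt_mul (by linarith) _
  calc |v x - vb| = |w x| := rfl
    _ ≤ K * Real.sqrt (energy b v + ∑' x, (w x) ^ 2 * m x) := h1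
    _ ≤ K * (Real.sqrt (1 + Cp) * Real.sqrt (energy b v)) := by
        apply mul_le_mul_of_nonneg_left _ hK0
        rw [← h4]
        exact h3
    _ = K * Real.sqrt (1 + Cp) * Real.sqrt (energy b v) := by ring

end Aux

/-- coercivity of `J(v) = (1/2)Q(v) + c m(X) v̄` on the constraint
set `{v ∈ D(Q) : ⟨h e^v, 1⟩ = c m(X)}`: `J(v) ≥ (1/4) Q(v) + C`. -/
theorem stmt18 {X : Type*} [Countable X] (b : X → X → ℝ) (m : X → ℝ)
    (hb : IsGraph b) (hconn : GraphConnected b) (hm : FinMeasure m)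
    (hcc : CanCompact b m) (c : ℝ) (hc : 0 < c)
    (h : X → ℝ) (hh2 : MemL2 m h) (hne : h ≠ 0) :
    ∃ C : ℝ, ∀ v : X → ℝ, MemDQ b m v →
      (∑' x, h x * Real.exp (v x) * m x) = c * (∑' x, m x) →
      (1 / 4) * energy b v + C ≤
        (1 / 2) * energy b v + c * (∑' x, m x) * mean m v := by
  rcases isEmpty_or_nonempty X with hXe | hXn
  · refine ⟨0, fun v hv hcon => ?_⟩
    have hE : energy b v = 0 := by
      unfold energy
      rw [tsum_empty]
      ring
    have hM : (∑' x : X, m x) = 0 := tsum_empty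
    rw [hM, hE]
    simp
  · haveI := hXn
    obtain ⟨A, hA0, hAb⟩ := sup_mean_bound hb hconn hm hcc
    obtain ⟨M, hMdef⟩ : ∃ M : ℝ, (∑' x, m x) = M := ⟨_, rfl⟩
    obtain ⟨x₀⟩ := hXn
    have hMpos : 0 < M := by
      rw [← hMdef]
      exact lt_of_lt_of_le (hm.pos x₀) (Summable.le_tsum hm.summable x₀ fun y _ => le_of_lt (hm.pos y))
    have hHsum : Summable (fun x => |h x| * m x) := summable_abs_mul hm hh2
    obtain ⟨H, hHdef⟩ : ∃ H : ℝ, (∑' x, |h x| * m x) = H := ⟨_, rfl⟩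
    have hHpos : 0 < H := by
      obtain ⟨xh, hxh⟩ := Function.ne_iff.mp hne
      have h1 : 0 < |h xh| * m xh := mul_pos (abs_pos.mpr hxh) (hm.pos xh)
      have h2 : |h xh| * m xh ≤ H := by
        rw [← hHdef]
        exact Summable.le_tsum hHsum xh fun y _ => mul_nonneg (abs_nonneg _) (le_of_lt (hm.pos y))
      linarith
    have hcM : 0 < c * M := mul_pos hc hMpos
    refine ⟨c * M * (Real.log (c * M) - Real.log H) - (c * M * A) ^ 2, ?_⟩
    intro v hv hcon
    rw [hMdef] at hcon ⊢
    obtain ⟨E, hEdef⟩ : ∃ E : ℝ, energy b v = E := ⟨_, rfl⟩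
    have hE0 : 0 ≤ E := hEdef ▸ energy_nonneg hb v
    obtain ⟨sE, hsEdef⟩ : ∃ sE : ℝ, Real.sqrt E = sE := ⟨_, rfl⟩
    have hsE0 : 0 ≤ sE := hsEdef ▸ Real.sqrt_nonneg _
    have hsEsq : sE ^ 2 = E := by rw [← hsEdef]; exact Real.sq_sqrt hE0
    have hsup : ∀ x, v x ≤ mean m v + A * sE := by
      intro x
      have h1 := hAb v hv x
      rw [hEdef, hsEdef] at h1
      have h3 := (abs_le.mp h1).2
      linarith
    have hexp : ∀ x, Real.exp (v x) ≤ Real.exp (mean m v + A * sE) := fun x =>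
      Real.exp_le_exp.mpr (hsup x)
    have hbnd : ∀ x, h x * Real.exp (v x) * m x
        ≤ Real.exp (mean m v + A * sE) * (|h x| * m x) := by
      intro x
      have h1 : h x * Real.exp (v x) * m x ≤ |h x| * Real.exp (v x) * m x := by
        apply mul_le_mul_of_nonneg_right _ (le_of_lt (hm.pos x))
        exact mul_le_mul_of_nonneg_right (le_abs_self _) (le_of_lt (Real.exp_pos _))
      have h2 : |h x| * Real.exp (v x) * m x
          ≤ |h x| * Real.exp (mean m v + A * sE) * m x := by
        apply mul_le_mul_of_nonneg_right _ (le_of_lt (hm.pos x))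
        exact mul_le_mul_of_nonneg_left (hexp x) (abs_nonneg _)
      calc h x * Real.exp (v x) * m x ≤ |h x| * Real.exp (v x) * m x := h1
        _ ≤ |h x| * Real.exp (mean m v + A * sE) * m x := h2
        _ = Real.exp (mean m v + A * sE) * (|h x| * m x) := by ring
    have hsum2 : Summable (fun x => Real.exp (mean m v + A * sE) * (|h x| * m x)) :=
      hHsum.mul_left _
    have hsum1 : Summable (fun x => h x * Real.exp (v x) * m x) := by
      apply Summable.of_abs
      apply Summable.of_nonneg_of_le (fun x => abs_nonneg _) _ hsum2
      intro x
      have e : |h x * Real.exp (v x) * m x| = |h x| * Real.exp (v x) * m x := by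
        rw [abs_mul, abs_mul, abs_of_pos (Real.exp_pos _), abs_of_pos (hm.pos x)]
      rw [e]
      calc |h x| * Real.exp (v x) * m x
          ≤ |h x| * Real.exp (mean m v + A * sE) * m x := by
            apply mul_le_mul_of_nonneg_right _ (le_of_lt (hm.pos x))
            exact mul_le_mul_of_nonneg_left (hexp x) (abs_nonneg _)
        _ = Real.exp (mean m v + A * sE) * (|h x| * m x) := by ring
    have key : c * M ≤ Real.exp (mean m v + A * sE) * H := by
      rw [← hcon]
      calc ∑' x, h x * Real.exp (v x) * m x
          ≤ ∑' x, Real.exp (mean m v + A * sE) * (|h x| * m x) :=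
            Summable.tsum_le_tsum hbnd hsum1 hsum2
        _ = Real.exp (mean m v + A * sE) * ∑' x, |h x| * m x := tsum_mul_left
        _ = Real.exp (mean m v + A * sE) * H := by rw [hHdef]
    have hlog : Real.log (c * M) ≤ (mean m v + A * sE) + Real.log H := by
      have h1 := Real.log_le_log hcM key
      rw [Real.log_mul (Real.exp_pos _).ne' (ne_of_gt hHpos), Real.log_exp] at h1
      exact h1
    have hamgm : c * M * A * sE ≤ (1 / 4) * E + (c * M * A) ^ 2 := by
      nlinarith [sq_nonneg (sE - 2 * (c * M * A)), hsEsq]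
    have h5 : c * M * (Real.log (c * M) - Real.log H - A * sE) ≤ c * M * mean m v := by
      apply mul_le_mul_of_nonneg_left _ (le_of_lt hcM)
      linarith
    rw [hEdef]
    nlinarith [h5, hamgm]
end
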